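/- arXiv:1902.04881 — 3 statements merged into one kernel-verified Lean document; each statement's English description precedes it below -/
import Mathlib

section
/- Let m : S² → S² be a smooth map such that ω(m∘Φ) is integrable on ℝ², let R ∈ SO(3), and define the jointly rotated field m_R(y) = R m(R⁻¹ y) for y ∈ S². Then the angular momenta are frame indifferent: S(m_R∘Φ) = R·S(m∘Φ), L(m_R∘Φ) = R·L(m∘Φ), and consequently J(m_R∘Φ) = R·J(m∘Φ). -/
open MeasureTheory Filter

noncomputable section

/-- Euclidean dot product on `Fin 3 → ℝ`. -/
def dot3 (a b : Fin 3 → ℝ) : ℝ := a 0 * b 0 + a 1 * b 1 + a 2 * b 2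

/-- Cross product on `Fin 3 → ℝ`. -/
def cross3 (a b : Fin 3 → ℝ) : Fin 3 → ℝ :=
  ![a 1 * b 2 - a 2 * b 1, a 2 * b 0 - a 0 * b 2, a 0 * b 1 - a 1 * b 0]

/-- Euclidean norm on `Fin 3 → ℝ`. -/
def enorm3 (v : Fin 3 → ℝ) : ℝ := Real.sqrt (dot3 v v)

/-- Third standard basis vector `e₃`. -/
def e3 : Fin 3 → ℝ := ![0, 0, 1]

/-- Conformal factor λ(x) = 2/(1+|x|²) of the stereographic parametrization. -/
def lam (x : ℝ × ℝ) : ℝ := 2 / (1 + x.1 ^ 2 + x.2 ^ 2)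

/-- Stereographic parametrization Φ : ℝ² → S² ⊂ ℝ³ (centered at the north pole):
Φ(x) = λ(x)(x₁, x₂, (1-|x|²)/2). -/
def Phi (x : ℝ × ℝ) : Fin 3 → ℝ :=
  fun i => lam x * ![x.1, x.2, (1 - (x.1 ^ 2 + x.2 ^ 2)) / 2] i

/-- First partial derivative ∂₁ of a vector field on ℝ². -/
def pd1 (u : ℝ × ℝ → Fin 3 → ℝ) (x : ℝ × ℝ) : Fin 3 → ℝ := fderiv ℝ u x (1, 0)

/-- Second partial derivative ∂₂ of a vector field on ℝ². -/
def pd2 (u : ℝ × ℝ → Fin 3 → ℝ) (x : ℝ × ℝ) : Fin 3 → ℝ := fderiv ℝ u x (0, 1)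

/-- Topological vorticity ω(u) = u · (∂₁u × ∂₂u). -/
def vort (u : ℝ × ℝ → Fin 3 → ℝ) (x : ℝ × ℝ) : ℝ :=
  dot3 (u x) (cross3 (pd1 u x) (pd2 u x))

/-- Topological charge Q(u) = (1/4π) ∫ ω(u). -/
def Qdeg (u : ℝ × ℝ → Fin 3 → ℝ) : ℝ := (1 / (4 * Real.pi)) * ∫ x : ℝ × ℝ, vort u x

/-- Spin angular momentum S(u) = ∫ λ(x)² u(x) dx. -/
def Sspin (u : ℝ × ℝ → Fin 3 → ℝ) : Fin 3 → ℝ := ∫ x : ℝ × ℝ, lam x ^ 2 • u x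

/-- Orbital angular momentum L(u) = ∫ Φ(x) ω(u)(x) dx. -/
def Lorb (u : ℝ × ℝ → Fin 3 → ℝ) : Fin 3 → ℝ := ∫ x : ℝ × ℝ, vort u x • Phi x

/-- Total angular momentum J(u) = S(u) + L(u). -/
def Jmom (u : ℝ × ℝ → Fin 3 → ℝ) : Fin 3 → ℝ := Sspin u + Lorb u

/-- The micromagnetic energy in stereographic coordinates:
E(u) = (1/2) ∫ [|∇u|² + κ(1-(u·Φ)²)λ(x)²] dx. -/
def energy (κ : ℝ) (u : ℝ × ℝ → Fin 3 → ℝ) : ℝ :=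
  (1 / 2) * ∫ x : ℝ × ℝ,
    (dot3 (pd1 u x) (pd1 u x) + dot3 (pd2 u x) (pd2 u x)
      + κ * (1 - dot3 (u x) (Phi x) ^ 2) * lam x ^ 2)

/-- `u` takes values in the unit sphere S². -/
def SphereValued (u : ℝ × ℝ → Fin 3 → ℝ) : Prop := ∀ x, dot3 (u x) (u x) = 1

/-- Planar rotation ρ_θ of ℝ² by angle θ. -/
def rotPlane (θ : ℝ) (x : ℝ × ℝ) : ℝ × ℝ :=
  (Real.cos θ * x.1 - Real.sin θ * x.2, Real.sin θ * x.1 + Real.cos θ * x.2)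

/-- Rotation R_θ of ℝ³ by angle θ about the e₃-axis. -/
def rot3 (θ : ℝ) (v : Fin 3 → ℝ) : Fin 3 → ℝ :=
  ![Real.cos θ * v 0 - Real.sin θ * v 1, Real.sin θ * v 0 + Real.cos θ * v 1, v 2]

/-- k-equivariance: u(ρ_θ x) = R_{kθ} u(x) for all θ, x. -/
def IsEquivariant (k : ℤ) (u : ℝ × ℝ → Fin 3 → ℝ) : Prop :=
  ∀ (θ : ℝ) (x : ℝ × ℝ), u (rotPlane θ x) = rot3 ((k : ℝ) * θ) (u x)

/-- Planar Laplacian Δw = ∂₁₁w + ∂₂₂w of a vector field on ℝ². -/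
def lapP (w : ℝ × ℝ → Fin 3 → ℝ) (x : ℝ × ℝ) : Fin 3 → ℝ := pd1 (pd1 w) x + pd2 (pd2 w) x

/-- The Landau–Lifshitz equation in stereographic coordinates:
∂ₜu = u × (λ(x)⁻² Δu + κ (u·Φ) Φ). -/
def IsLLSolution (κ : ℝ) (u : ℝ → ℝ × ℝ → Fin 3 → ℝ) : Prop :=
  ∀ (t : ℝ) (x : ℝ × ℝ), deriv (fun s => u s x) t =
    cross3 (u t x) ((lam x ^ 2)⁻¹ • lapP (u t) x + (κ * dot3 (u t x) (Phi x)) • Phi x)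

namespace FrameAux

/-- The continuous linear map `(h₁,h₂) ↦ p h₁ + q h₂`. -/
def dl (p q : ℝ) : ℝ × ℝ →L[ℝ] ℝ :=
  p • (ContinuousLinearMap.fst ℝ ℝ ℝ) + q • (ContinuousLinearMap.snd ℝ ℝ ℝ)

@[simp] lemma dl_apply (p q : ℝ) (v : ℝ × ℝ) : dl p q v = p * v.1 + q * v.2 := by
  simp [dl]

lemma dl_eta (L : ℝ × ℝ →L[ℝ] ℝ) : dl (L (1,0)) (L (0,1)) = L := by
  refine ContinuousLinearMap.ext fun v => ?_
  have hv : v = v.1 • ((1:ℝ),(0:ℝ)) + v.2 • ((0:ℝ),(1:ℝ)) := by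
    ext <;> simp
  conv_rhs => rw [hv]
  rw [map_add, _root_.map_smul, _root_.map_smul, dl_apply]
  simp [smul_eq_mul]
  ring

lemma hasFDerivAt_dl' {f : ℝ × ℝ → ℝ} {L : ℝ × ℝ →L[ℝ] ℝ} {p q : ℝ} {x : ℝ × ℝ}
    (h : HasFDerivAt f L x) (h1 : L (1,0) = p) (h2 : L (0,1) = q) :
    HasFDerivAt f (dl p q) x := by
  subst h1; subst h2; rw [dl_eta]; exact h

lemma fst_dl (x : ℝ × ℝ) : HasFDerivAt (fun v : ℝ × ℝ => v.1) (dl 1 0) x :=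
  hasFDerivAt_dl' hasFDerivAt_fst (by simp) (by simp)

lemma snd_dl (x : ℝ × ℝ) : HasFDerivAt (fun v : ℝ × ℝ => v.2) (dl 0 1) x :=
  hasFDerivAt_dl' hasFDerivAt_snd (by simp) (by simp)

lemma const_dl (c : ℝ) (x : ℝ × ℝ) : HasFDerivAt (fun _ : ℝ × ℝ => c) (dl 0 0) x :=
  hasFDerivAt_dl' (hasFDerivAt_const c x) (by simp) (by simp)

lemma add_dl {f g : ℝ × ℝ → ℝ} {p1 p2 q1 q2 : ℝ} {x : ℝ × ℝ}
    (hf : HasFDerivAt f (dl p1 p2) x) (hg : HasFDerivAt g (dl q1 q2) x) :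
    HasFDerivAt (fun y => f y + g y) (dl (p1 + q1) (p2 + q2)) x :=
  hasFDerivAt_dl' (hf.add hg) (by simp) (by simp)

lemma mul_dl {f g : ℝ × ℝ → ℝ} {p1 p2 q1 q2 : ℝ} {x : ℝ × ℝ}
    (hf : HasFDerivAt f (dl p1 p2) x) (hg : HasFDerivAt g (dl q1 q2) x) :
    HasFDerivAt (fun y => f y * g y) (dl (p1 * g x + f x * q1) (p2 * g x + f x * q2)) x :=
  hasFDerivAt_dl' (hf.mul hg) (by simp; ring) (by simp; ring)

lemma inv_dl {g : ℝ × ℝ → ℝ} {q1 q2 : ℝ} {x : ℝ × ℝ}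
    (hg : HasFDerivAt g (dl q1 q2) x) (h : g x ≠ 0) :
    HasFDerivAt (fun y => (g y)⁻¹) (dl (-q1 / g x ^ 2) (-q2 / g x ^ 2)) x := by
  have hinv := (hasFDerivAt_inv' (𝕜 := ℝ) h).comp x hg
  refine hasFDerivAt_dl' hinv ?_ ?_ <;>
    · simp only [ContinuousLinearMap.comp_apply, ContinuousLinearMap.neg_apply,
        ContinuousLinearMap.mulLeftRight_apply, dl_apply]
      field_simp
      ring

lemma div_dl {f g : ℝ × ℝ → ℝ} {p1 p2 q1 q2 : ℝ} {x : ℝ × ℝ}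
    (hf : HasFDerivAt f (dl p1 p2) x) (hg : HasFDerivAt g (dl q1 q2) x) (h : g x ≠ 0) :
    HasFDerivAt (fun y => f y / g y)
      (dl ((p1 * g x - f x * q1) / g x ^ 2) ((p2 * g x - f x * q2) / g x ^ 2)) x := by
  simp only [div_eq_mul_inv]
  refine hasFDerivAt_dl' (hf.mul (inv_dl hg h)) ?_ ?_ <;>
    · simp only [ContinuousLinearMap.add_apply, ContinuousLinearMap.smul_apply, dl_apply,
        smul_eq_mul]
      field_simp
      ring

-- chunk 2 starts here
/-- denominator 1+|x|². -/
def den (x : ℝ × ℝ) : ℝ := 1 + x.1 ^ 2 + x.2 ^ 2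

lemma den_pos (x : ℝ × ℝ) : 0 < den x := by unfold den; positivity

lemma den_ne (x : ℝ × ℝ) : den x ≠ 0 := (den_pos x).ne'

/-- ∂₁ of Phi. -/
def D1p (x : ℝ × ℝ) : Fin 3 → ℝ :=
  ![2 * (1 + x.2 ^ 2 - x.1 ^ 2) / den x ^ 2, -4 * x.1 * x.2 / den x ^ 2, -4 * x.1 / den x ^ 2]

/-- ∂₂ of Phi. -/
def D2p (x : ℝ × ℝ) : Fin 3 → ℝ :=
  ![-4 * x.1 * x.2 / den x ^ 2, 2 * (1 + x.1 ^ 2 - x.2 ^ 2) / den x ^ 2, -4 * x.2 / den x ^ 2]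

lemma hasFDerivAt_den (x : ℝ × ℝ) :
    HasFDerivAt den (dl (2 * x.1) (2 * x.2)) x := by
  have h := add_dl (add_dl (const_dl 1 x) (mul_dl (fst_dl x) (fst_dl x)))
    (mul_dl (snd_dl x) (snd_dl x))
  have h2 : den = fun v : ℝ × ℝ => 1 + v.1 * v.1 + v.2 * v.2 := by
    funext v; simp [den]; ring
  rw [h2]
  exact hasFDerivAt_dl' h (by simp; ring) (by simp; ring)

lemma hasFDerivAt_Phi_comp (x : ℝ × ℝ) (i : Fin 3) :
    HasFDerivAt (fun y => Phi y i) (dl (D1p x i) (D2p x i)) x := by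
  have hne := den_ne x
  fin_cases i
  · show HasFDerivAt (fun y => Phi y 0) (dl (D1p x 0) (D2p x 0)) x
    have h2 : (fun y => Phi y 0) = fun v : ℝ × ℝ => (2 * v.1) / den v := by
      funext v; simp [Phi, lam, den]; ring
    rw [h2]
    exact hasFDerivAt_dl' (div_dl (mul_dl (const_dl 2 x) (fst_dl x)) (hasFDerivAt_den x) hne)
      (by simp [D1p, den]; ring) (by simp [D2p, den]; ring)
  · show HasFDerivAt (fun y => Phi y 1) (dl (D1p x 1) (D2p x 1)) x
    have h2 : (fun y => Phi y 1) = fun v : ℝ × ℝ => (2 * v.2) / den v := by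
      funext v; simp [Phi, lam, den]; ring
    rw [h2]
    exact hasFDerivAt_dl' (div_dl (mul_dl (const_dl 2 x) (snd_dl x)) (hasFDerivAt_den x) hne)
      (by simp [D1p, den]; ring) (by simp [D2p, den]; ring)
  · show HasFDerivAt (fun y => Phi y 2) (dl (D1p x 2) (D2p x 2)) x
    have h2 : (fun y => Phi y 2) = fun v : ℝ × ℝ => (2 / den v) + (-1) := by
      funext v
      have := den_ne v
      simp [Phi, lam, den]
      field_simp
      ring
    rw [h2]
    exact hasFDerivAt_dl' (add_dl (div_dl (const_dl 2 x) (hasFDerivAt_den x) hne)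
        (const_dl (-1) x))
      (by simp [D1p, den]; ring) (by simp [D2p, den]; ring)

lemma dot3_Phi (x : ℝ × ℝ) : dot3 (Phi x) (Phi x) = 1 := by
  have := den_ne x
  simp [dot3, Phi, lam, den] at *
  field_simp
  ring

lemma dot3_Phi_D1p (x : ℝ × ℝ) : dot3 (Phi x) (D1p x) = 0 := by
  have := den_ne x
  simp [dot3, Phi, lam, D1p, den] at *
  field_simp
  ring

lemma dot3_Phi_D2p (x : ℝ × ℝ) : dot3 (Phi x) (D2p x) = 0 := by
  have := den_ne x
  simp [dot3, Phi, lam, D2p, den] at *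
  field_simp
  ring

lemma vort_Phi (x : ℝ × ℝ) : dot3 (Phi x) (cross3 (D1p x) (D2p x)) = lam x ^ 2 := by
  have := den_ne x
  simp [dot3, cross3, Phi, lam, D1p, D2p, den] at *
  field_simp
  ring

/-- The key polynomial identity behind conformality of stereographic projection. -/
lemma key_poly (W W1 W2 : Fin 3 → ℝ) (h1 : dot3 W W = 1) (h2 : dot3 W W1 = 0)
    (h3 : dot3 W W2 = 0) :
    (W1 0 * (1 + W 2) - W 0 * W1 2) * (W2 1 * (1 + W 2) - W 1 * W2 2)
      - (W2 0 * (1 + W 2) - W 0 * W2 2) * (W1 1 * (1 + W 2) - W 1 * W1 2)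
      = (1 + W 2) ^ 2 * dot3 W (cross3 W1 W2) := by
  simp only [dot3, cross3] at *
  simp only [Matrix.cons_val_zero, Matrix.cons_val_one, Matrix.head_cons,
    Matrix.cons_val_two, Matrix.tail_cons] at *
  linear_combination ((1 + W 2) * (W 0 * W2 1 - W 1 * W2 0)) * h2
    + ((1 + W 2) * (W 1 * W1 0 - W 0 * W1 1)) * h3
    - ((1 + W 2) * (W1 0 * W2 1 - W1 1 * W2 0)) * h1


-- chunk 3
open Matrix in
lemma mulVec_dot3 {Q : Matrix (Fin 3) (Fin 3) ℝ} (hQ : Qᵀ * Q = 1) (v w : Fin 3 → ℝ) :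
    dot3 (Q.mulVec v) (Q.mulVec w) = dot3 v w := by
  have h00 := congrFun (congrFun hQ 0) 0
  have h01 := congrFun (congrFun hQ 0) 1
  have h02 := congrFun (congrFun hQ 0) 2
  have h11 := congrFun (congrFun hQ 1) 1
  have h12 := congrFun (congrFun hQ 1) 2
  have h22 := congrFun (congrFun hQ 2) 2
  simp [Matrix.mul_apply, Fin.sum_univ_three, Matrix.transpose_apply, Matrix.one_apply]
    at h00 h01 h02 h11 h12 h22
  simp only [dot3, Matrix.mulVec, dotProduct, Fin.sum_univ_three]
  linear_combination (v 0 * w 0) * h00 + (v 1 * w 1) * h11 + (v 2 * w 2) * h22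
    + (v 0 * w 1 + v 1 * w 0) * h01 + (v 0 * w 2 + v 2 * w 0) * h02
    + (v 1 * w 2 + v 2 * w 1) * h12

open Matrix in
lemma triple_mulVec (Q : Matrix (Fin 3) (Fin 3) ℝ) (v a b : Fin 3 → ℝ) :
    dot3 (Q.mulVec v) (cross3 (Q.mulVec a) (Q.mulVec b))
      = Q.det * dot3 v (cross3 a b) := by
  simp only [dot3, cross3, Matrix.mulVec, dotProduct, Fin.sum_univ_three,
    Matrix.det_fin_three, Matrix.cons_val_zero, Matrix.cons_val_one, Matrix.head_cons,
    Matrix.cons_val_two, Matrix.tail_cons]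
  ring

lemma det_prod_dl (p q r s : ℝ) :
    (((dl p q).prod (dl r s)) : ℝ × ℝ →L[ℝ] ℝ × ℝ).det = p * s - q * r := by
  have : (((dl p q).prod (dl r s)) : ℝ × ℝ →L[ℝ] ℝ × ℝ).det
      = LinearMap.det (((dl p q).prod (dl r s)) : ℝ × ℝ →L[ℝ] ℝ × ℝ).toLinearMap := rfl
  rw [this, ← LinearMap.det_toMatrix (Module.Basis.finTwoProd ℝ), Matrix.det_fin_two]
  simp [LinearMap.toMatrix_apply, Module.Basis.finTwoProd]

/-- `1 + Q(Φ(x))₃`. -/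
def cQ (Q : Matrix (Fin 3) (Fin 3) ℝ) (x : ℝ × ℝ) : ℝ := 1 + Q.mulVec (Phi x) 2

/-- The Möbius transformation of the plane induced by `Q`. -/
def Tmap (Q : Matrix (Fin 3) (Fin 3) ℝ) (x : ℝ × ℝ) : ℝ × ℝ :=
  (Q.mulVec (Phi x) 0 / cQ Q x, Q.mulVec (Phi x) 1 / cQ Q x)

/-- Domain of `Tmap Q`. -/
def sQ (Q : Matrix (Fin 3) (Fin 3) ℝ) : Set (ℝ × ℝ) := {x | cQ Q x ≠ 0}

/-- Derivative of `Tmap Q`. -/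
def DT (Q : Matrix (Fin 3) (Fin 3) ℝ) (x : ℝ × ℝ) : ℝ × ℝ →L[ℝ] ℝ × ℝ :=
  (dl ((Q.mulVec (D1p x) 0 * cQ Q x - Q.mulVec (Phi x) 0 * Q.mulVec (D1p x) 2) / cQ Q x ^ 2)
      ((Q.mulVec (D2p x) 0 * cQ Q x - Q.mulVec (Phi x) 0 * Q.mulVec (D2p x) 2) / cQ Q x ^ 2)).prod
  (dl ((Q.mulVec (D1p x) 1 * cQ Q x - Q.mulVec (Phi x) 1 * Q.mulVec (D1p x) 2) / cQ Q x ^ 2)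
      ((Q.mulVec (D2p x) 1 * cQ Q x - Q.mulVec (Phi x) 1 * Q.mulVec (D2p x) 2) / cQ Q x ^ 2))

lemma hasFDerivAt_mulVec_Phi (Q : Matrix (Fin 3) (Fin 3) ℝ) (x : ℝ × ℝ) (i : Fin 3) :
    HasFDerivAt (fun y => Q.mulVec (Phi y) i)
      (dl (Q.mulVec (D1p x) i) (Q.mulVec (D2p x) i)) x := by
  have h2 : (fun y => Q.mulVec (Phi y) i)
      = fun y => Q i 0 * Phi y 0 + Q i 1 * Phi y 1 + Q i 2 * Phi y 2 := by
    funext y; simp [Matrix.mulVec, dotProduct, Fin.sum_univ_three]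
  rw [h2]
  refine hasFDerivAt_dl'
    (add_dl (add_dl (mul_dl (const_dl (Q i 0) x) (hasFDerivAt_Phi_comp x 0))
        (mul_dl (const_dl (Q i 1) x) (hasFDerivAt_Phi_comp x 1)))
      (mul_dl (const_dl (Q i 2) x) (hasFDerivAt_Phi_comp x 2))) ?_ ?_ <;>
    · simp [Matrix.mulVec, dotProduct, Fin.sum_univ_three]
      try ring

lemma hasFDerivAt_cQ (Q : Matrix (Fin 3) (Fin 3) ℝ) (x : ℝ × ℝ) :
    HasFDerivAt (cQ Q) (dl (Q.mulVec (D1p x) 2) (Q.mulVec (D2p x) 2)) x := by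
  have h2 : cQ Q = fun y => (1 : ℝ) + Q.mulVec (Phi y) 2 := rfl
  rw [h2]
  exact hasFDerivAt_dl' (add_dl (const_dl 1 x) (hasFDerivAt_mulVec_Phi Q x 2))
    (by simp) (by simp)

lemma hasFDerivAt_Tmap {Q : Matrix (Fin 3) (Fin 3) ℝ} {x : ℝ × ℝ} (hx : cQ Q x ≠ 0) :
    HasFDerivAt (Tmap Q) (DT Q x) x :=
  (HasFDerivAt.prodMk (div_dl (hasFDerivAt_mulVec_Phi Q x 0) (hasFDerivAt_cQ Q x) hx)
    (div_dl (hasFDerivAt_mulVec_Phi Q x 1) (hasFDerivAt_cQ Q x) hx))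

lemma continuous_cQ (Q : Matrix (Fin 3) (Fin 3) ℝ) : Continuous (cQ Q) :=
  continuous_iff_continuousAt.mpr fun x => (hasFDerivAt_cQ Q x).continuousAt

lemma isOpen_sQ (Q : Matrix (Fin 3) (Fin 3) ℝ) : IsOpen (sQ Q) :=
  isOpen_compl_singleton.preimage (continuous_cQ Q)

lemma measurableSet_sQ (Q : Matrix (Fin 3) (Fin 3) ℝ) : MeasurableSet (sQ Q) :=
  (isOpen_sQ Q).measurableSet


lemma lam_pos (x : ℝ × ℝ) : 0 < lam x := by
  unfold lam
  have := den_pos x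
  unfold den at this
  positivity

lemma one_add_Phi2 (x : ℝ × ℝ) : 1 + Phi x 2 = lam x := by
  have := den_ne x
  unfold den at this
  simp [Phi, lam]
  field_simp
  ring

section QOrth
open Matrix

variable {Q : Matrix (Fin 3) (Fin 3) ℝ} {x : ℝ × ℝ}

lemma WW_eq_one (hQ : Qᵀ * Q = 1) (x : ℝ × ℝ) :
    dot3 (Q.mulVec (Phi x)) (Q.mulVec (Phi x)) = 1 := by
  rw [mulVec_dot3 hQ, dot3_Phi]

lemma WW1_eq_zero (hQ : Qᵀ * Q = 1) (x : ℝ × ℝ) :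
    dot3 (Q.mulVec (Phi x)) (Q.mulVec (D1p x)) = 0 := by
  rw [mulVec_dot3 hQ, dot3_Phi_D1p]

lemma WW2_eq_zero (hQ : Qᵀ * Q = 1) (x : ℝ × ℝ) :
    dot3 (Q.mulVec (Phi x)) (Q.mulVec (D2p x)) = 0 := by
  rw [mulVec_dot3 hQ, dot3_Phi_D2p]

lemma cQ_nonneg (hQ : Qᵀ * Q = 1) (x : ℝ × ℝ) : 0 ≤ cQ Q x := by
  have h := WW_eq_one hQ x
  unfold dot3 at h
  unfold cQ
  nlinarith [sq_nonneg (Q.mulVec (Phi x) 0), sq_nonneg (Q.mulVec (Phi x) 1),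
    sq_nonneg (1 + Q.mulVec (Phi x) 2)]

lemma cQ_pos (hQ : Qᵀ * Q = 1) (hx : cQ Q x ≠ 0) : 0 < cQ Q x :=
  lt_of_le_of_ne (cQ_nonneg hQ x) (Ne.symm hx)

lemma lam_Tmap (hQ : Qᵀ * Q = 1) (hx : cQ Q x ≠ 0) : lam (Tmap Q x) = cQ Q x := by
  have h := WW_eq_one hQ x
  unfold dot3 at h
  unfold lam Tmap
  have hc : cQ Q x = 1 + Q.mulVec (Phi x) 2 := rfl
  field_simp
  linear_combination (-1) * h - (cQ Q x - 1 + (Q *ᵥ Phi x) 2) * hc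

lemma Phi_Tmap (hQ : Qᵀ * Q = 1) (hx : cQ Q x ≠ 0) :
    Phi (Tmap Q x) = Q.mulVec (Phi x) := by
  have h := WW_eq_one hQ x
  unfold dot3 at h
  have hl := lam_Tmap hQ hx
  have hc : cQ Q x = 1 + Q.mulVec (Phi x) 2 := rfl
  funext i
  fin_cases i
  · show Phi (Tmap Q x) 0 = Q.mulVec (Phi x) 0
    simp only [Phi, Matrix.cons_val_zero, hl]
    show cQ Q x * (Q.mulVec (Phi x) 0 / cQ Q x) = _
    field_simp
  · show Phi (Tmap Q x) 1 = Q.mulVec (Phi x) 1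
    simp only [Phi, Matrix.cons_val_one, Matrix.head_cons, hl]
    show cQ Q x * (Q.mulVec (Phi x) 1 / cQ Q x) = _
    field_simp
  · show Phi (Tmap Q x) 2 = Q.mulVec (Phi x) 2
    simp only [Phi, Matrix.cons_val_two, Matrix.tail_cons, Matrix.head_cons, hl]
    show cQ Q x * ((1 - ((Q.mulVec (Phi x) 0 / cQ Q x) ^ 2
        + (Q.mulVec (Phi x) 1 / cQ Q x) ^ 2)) / 2) = _
    field_simp
    linear_combination (-1) * h + (1 + cQ Q x - (Q *ᵥ Phi x) 2) * hc

lemma det_DT (hQ : Qᵀ * Q = 1) (hdet : Q.det = 1) (hx : cQ Q x ≠ 0) :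
    (DT Q x).det = lam x ^ 2 / cQ Q x ^ 2 := by
  unfold DT
  rw [det_prod_dl]
  have hk := key_poly (Q.mulVec (Phi x)) (Q.mulVec (D1p x)) (Q.mulVec (D2p x))
    (WW_eq_one hQ x) (WW1_eq_zero hQ x) (WW2_eq_zero hQ x)
  have ht : dot3 (Q.mulVec (Phi x)) (cross3 (Q.mulVec (D1p x)) (Q.mulVec (D2p x)))
      = lam x ^ 2 := by
    rw [triple_mulVec, vort_Phi, hdet, one_mul]
  rw [ht] at hk
  have hc : cQ Q x = 1 + Q.mulVec (Phi x) 2 := rfl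
  rw [← hc] at hk
  field_simp
  linear_combination hk

lemma cQ_transpose_Tmap (hQ : Qᵀ * Q = 1) (hx : cQ Q x ≠ 0) :
    cQ Qᵀ (Tmap Q x) = lam x := by
  unfold cQ
  rw [Phi_Tmap hQ hx, Matrix.mulVec_mulVec, hQ, Matrix.one_mulVec, one_add_Phi2]

lemma Tmap_Tmap (hQ : Qᵀ * Q = 1) (hx : cQ Q x ≠ 0) : Tmap Qᵀ (Tmap Q x) = x := by
  have h2 := cQ_transpose_Tmap hQ hx
  have hPP : Qᵀ.mulVec (Phi (Tmap Q x)) = Phi x := by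
    rw [Phi_Tmap hQ hx, Matrix.mulVec_mulVec, hQ, Matrix.one_mulVec]
  have e0 : Phi x 0 = lam x * x.1 := by simp [Phi]
  have e1 : Phi x 1 = lam x * x.2 := by simp [Phi]
  have hl := (lam_pos x).ne'
  have hT : Tmap Qᵀ (Tmap Q x) = ((Qᵀ.mulVec (Phi (Tmap Q x))) 0 / cQ Qᵀ (Tmap Q x),
      (Qᵀ.mulVec (Phi (Tmap Q x))) 1 / cQ Qᵀ (Tmap Q x)) := rfl
  rw [hT, hPP, h2, e0, e1]
  ext
  · simp
    field_simp
  · simp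
    field_simp

lemma mem_sQ_Tmap (hQ : Qᵀ * Q = 1) (hx : x ∈ sQ Q) : Tmap Q x ∈ sQ Qᵀ := by
  show cQ Qᵀ (Tmap Q x) ≠ 0
  rw [cQ_transpose_Tmap hQ hx]
  exact (lam_pos x).ne'

lemma injOn_Tmap (hQ : Qᵀ * Q = 1) : Set.InjOn (Tmap Q) (sQ Q) := by
  intro a ha b hb hab
  have h1 := Tmap_Tmap hQ ha
  have h2 := Tmap_Tmap hQ hb
  rw [← h1, hab, h2]

lemma image_Tmap (hQ : Qᵀ * Q = 1) (hQ2 : Q * Qᵀ = 1) :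
    Tmap Q '' sQ Q = sQ Qᵀ := by
  ext y
  constructor
  · rintro ⟨x, hx, rfl⟩
    exact mem_sQ_Tmap hQ hx
  · intro hy
    have hQ' : Qᵀᵀ * Qᵀ = 1 := by rw [Matrix.transpose_transpose]; exact hQ2
    refine ⟨Tmap Qᵀ y, mem_sQ_Tmap hQ' hy, ?_⟩
    have := Tmap_Tmap hQ' hy
    rwa [Matrix.transpose_transpose] at this

lemma compl_sQ_null (hQ : Qᵀ * Q = 1) : volume ((sQ Q)ᶜ : Set (ℝ × ℝ)) = 0 := by
  set p : Fin 3 → ℝ := Qᵀ.mulVec ![0, 0, -1] with hp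
  set pt : ℝ × ℝ := (p 0 / (1 + p 2), p 1 / (1 + p 2)) with hpt
  have hsub : ((sQ Q)ᶜ : Set (ℝ × ℝ)) ⊆ {pt} := by
    intro x hx
    have hc : cQ Q x = 0 := not_not.mp hx
    have h := WW_eq_one hQ x
    unfold dot3 at h
    have h2 : Q.mulVec (Phi x) 2 = -1 := by
      have : cQ Q x = 1 + Q.mulVec (Phi x) 2 := rfl
      rw [this] at hc; linarith
    have h0 : Q.mulVec (Phi x) 0 = 0 := by nlinarith
    have h1 : Q.mulVec (Phi x) 1 = 0 := by nlinarith
    have hQv : Q.mulVec (Phi x) = ![0, 0, -1] := by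
      funext i; fin_cases i <;> simp [h0, h1, h2]
    have hPhi : Phi x = p := by
      rw [hp, ← hQv, Matrix.mulVec_mulVec, hQ, Matrix.one_mulVec]
    have hlam : 1 + p 2 = lam x := by rw [← hPhi, one_add_Phi2]
    have e0 : Phi x 0 = lam x * x.1 := by simp [Phi]
    have e1 : Phi x 1 = lam x * x.2 := by simp [Phi]
    have hl := (lam_pos x).ne'
    have : x = pt := by
      rw [hpt, ← hPhi, one_add_Phi2, e0, e1]
      ext
      · simp; field_simp
      · simp; field_simp
    simp [this]
  refine measure_mono_null hsub ?_
  rw [show ({pt} : Set (ℝ × ℝ)) = {pt.1} ×ˢ {pt.2} by simp,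
    show (volume : Measure (ℝ × ℝ)) = (volume.prod volume) from rfl,
    MeasureTheory.Measure.prod_prod]
  simp

end QOrth


lemma Phi_ne_zero (x : ℝ × ℝ) : Phi x ≠ 0 := by
  intro h
  have h1 := dot3_Phi x
  rw [h] at h1
  simp [dot3] at h1

lemma differentiableAt_Phi (x : ℝ × ℝ) : DifferentiableAt ℝ Phi x :=
  differentiableAt_pi.mpr fun i => (hasFDerivAt_Phi_comp x i).differentiableAt

lemma vort_congr {f g : ℝ × ℝ → Fin 3 → ℝ} {x : ℝ × ℝ} (h : f =ᶠ[nhds x] g) :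
    vort f x = vort g x := by
  unfold vort pd1 pd2
  rw [h.fderiv_eq, h.self_of_nhds]

lemma cross_expand (U p q : Fin 3 → ℝ) (a b c d : ℝ) :
    dot3 U (cross3 (a • p + b • q) (c • p + d • q))
      = (a * d - b * c) * dot3 U (cross3 p q) := by
  simp only [dot3, cross3, Pi.add_apply, Pi.smul_apply, smul_eq_mul,
    Matrix.cons_val_zero, Matrix.cons_val_one, Matrix.head_cons,
    Matrix.cons_val_two, Matrix.tail_cons]
  ring

lemma clm_apply_pair (L : ℝ × ℝ →L[ℝ] (Fin 3 → ℝ)) (a b : ℝ) :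
    L (a, b) = a • L (1, 0) + b • L (0, 1) := by
  have hv : ((a, b) : ℝ × ℝ) = a • ((1:ℝ), (0:ℝ)) + b • ((0:ℝ), (1:ℝ)) := by
    ext <;> simp
  rw [hv, map_add, _root_.map_smul, _root_.map_smul]

open Matrix in
lemma vort_transform {M : (Fin 3 → ℝ) → Fin 3 → ℝ}
    {R : Matrix (Fin 3) (Fin 3) ℝ} (hR : Rᵀ * R = 1) (hRdet : R.det = 1)
    (hM : ∀ y : ℝ × ℝ, DifferentiableAt ℝ (fun z : ℝ × ℝ => M (Phi z)) y)
    {x : ℝ × ℝ} (hx : x ∈ sQ Rᵀ) :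
    vort (fun y => R.mulVec (M (Rᵀ.mulVec (Phi y)))) x
      = (lam x ^ 2 / cQ Rᵀ x ^ 2) * vort (fun z => M (Phi z)) (Tmap Rᵀ x) := by
  have hQ : (Rᵀ)ᵀ * Rᵀ = 1 := by
    rw [Matrix.transpose_transpose]; exact mul_eq_one_comm.mp hR
  have hdetQ : (Rᵀ).det = 1 := by rw [Matrix.det_transpose]; exact hRdet
  set u : ℝ × ℝ → Fin 3 → ℝ := fun z => M (Phi z) with hu
  set T : ℝ × ℝ → ℝ × ℝ := Tmap Rᵀ with hT
  have hE : (fun y => R.mulVec (M (Rᵀ.mulVec (Phi y)))) =ᶠ[nhds x]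
      (fun y => R.mulVec (u (T y))) := by
    filter_upwards [(isOpen_sQ Rᵀ).mem_nhds hx] with y hy
    show R.mulVec (M (Rᵀ.mulVec (Phi y))) = R.mulVec (M (Phi (Tmap Rᵀ y)))
    rw [Phi_Tmap hQ hy]
  rw [vort_congr hE]
  have hTT : HasFDerivAt T (DT Rᵀ x) x := hasFDerivAt_Tmap hx
  have hmr : HasFDerivAt (fun y => R.mulVec (u (T y)))
      ((LinearMap.toContinuousLinearMap (Matrix.mulVecLin R)).comp
        ((fderiv ℝ u (T x)).comp (DT Rᵀ x))) x :=
    (LinearMap.toContinuousLinearMap (Matrix.mulVecLin R)).hasFDerivAt.comp x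
      ((hM (T x)).hasFDerivAt.comp x hTT)
  have hfder := hmr.fderiv
  set t11 := (Rᵀ.mulVec (D1p x) 0 * cQ Rᵀ x - Rᵀ.mulVec (Phi x) 0 * Rᵀ.mulVec (D1p x) 2)
      / cQ Rᵀ x ^ 2 with ht11
  set t12 := (Rᵀ.mulVec (D2p x) 0 * cQ Rᵀ x - Rᵀ.mulVec (Phi x) 0 * Rᵀ.mulVec (D2p x) 2)
      / cQ Rᵀ x ^ 2 with ht12
  set t21 := (Rᵀ.mulVec (D1p x) 1 * cQ Rᵀ x - Rᵀ.mulVec (Phi x) 1 * Rᵀ.mulVec (D1p x) 2)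
      / cQ Rᵀ x ^ 2 with ht21
  set t22 := (Rᵀ.mulVec (D2p x) 1 * cQ Rᵀ x - Rᵀ.mulVec (Phi x) 1 * Rᵀ.mulVec (D2p x) 2)
      / cQ Rᵀ x ^ 2 with ht22
  have hDT10 : (DT Rᵀ x) (1, 0) = (t11, t21) := by
    simp [DT, ContinuousLinearMap.prod_apply, dl_apply, ht11, ht21]
  have hDT01 : (DT Rᵀ x) (0, 1) = (t12, t22) := by
    simp [DT, ContinuousLinearMap.prod_apply, dl_apply, ht12, ht22]
  have hp1 : pd1 (fun y => R.mulVec (u (T y))) x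
      = R.mulVec (t11 • pd1 u (T x) + t21 • pd2 u (T x)) := by
    unfold pd1
    rw [hfder]
    simp only [ContinuousLinearMap.comp_apply, hDT10]
    rw [clm_apply_pair]
    rfl
  have hp2 : pd2 (fun y => R.mulVec (u (T y))) x
      = R.mulVec (t12 • pd1 u (T x) + t22 • pd2 u (T x)) := by
    unfold pd2
    rw [hfder]
    simp only [ContinuousLinearMap.comp_apply, hDT01]
    rw [clm_apply_pair]
    rfl
  have hdet : t11 * t22 - t12 * t21 = lam x ^ 2 / cQ Rᵀ x ^ 2 := by
    have h1 := det_DT hQ hdetQ hx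
    rw [DT, det_prod_dl] at h1
    exact h1
  unfold vort
  rw [hp1, hp2]
  simp only [Matrix.mulVec_add, Matrix.mulVec_smul]
  rw [cross_expand, triple_mulVec R, hRdet]
  rw [← hdet]
  ring

end FrameAux

open FrameAux

open Matrix in
/-- **Frame indifference of the angular momenta.**
A smooth map `m : S² → S²` is represented by its 0-homogeneous extension
`M(z) = m(z/|z|)`, smooth away from the origin and mapping the sphere to itself.
For `R ∈ SO(3)`, the jointly rotated field is `m_R(y) = R m(R⁻¹ y)` (with `R⁻¹ = Rᵀ`).
Then `S(m_R∘Φ) = R·S(m∘Φ)`, `L(m_R∘Φ) = R·L(m∘Φ)` and `J(m_R∘Φ) = R·J(m∘Φ)`. -/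
theorem frame_indifference_angular_momentum
    (M : (Fin 3 → ℝ) → Fin 3 → ℝ)
    (hMsm : ContDiffOn ℝ (⊤ : ℕ∞) M {z | z ≠ 0})
    (hMhom : ∀ z : Fin 3 → ℝ, z ≠ 0 → M z = M ((Real.sqrt (dot3 z z))⁻¹ • z))
    (hMsph : ∀ y : Fin 3 → ℝ, dot3 y y = 1 → dot3 (M y) (M y) = 1)
    (hint : Integrable (vort fun x => M (Phi x)))
    (R : Matrix (Fin 3) (Fin 3) ℝ) (hR : Rᵀ * R = 1) (hRdet : R.det = 1) :
    Sspin (fun x => R.mulVec (M (Rᵀ.mulVec (Phi x))))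
        = R.mulVec (Sspin fun x => M (Phi x)) ∧
    Lorb (fun x => R.mulVec (M (Rᵀ.mulVec (Phi x))))
        = R.mulVec (Lorb fun x => M (Phi x)) ∧
    Jmom (fun x => R.mulVec (M (Rᵀ.mulVec (Phi x))))
        = R.mulVec (Jmom fun x => M (Phi x)) := by
  have hR' : R * Rᵀ = 1 := mul_eq_one_comm.mp hR
  have hQ : (Rᵀ)ᵀ * Rᵀ = 1 := by rw [Matrix.transpose_transpose]; exact hR'
  have hQ2 : Rᵀ * (Rᵀ)ᵀ = 1 := by rw [Matrix.transpose_transpose]; exact hR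
  have hdetQ : (Rᵀ).det = 1 := by rw [Matrix.det_transpose]; exact hRdet
  have hMopen : IsOpen {z : Fin 3 → ℝ | z ≠ 0} := isOpen_compl_singleton
  have hM : ∀ y : ℝ × ℝ, DifferentiableAt ℝ (fun z : ℝ × ℝ => M (Phi z)) y := fun y =>
    ((hMsm.contDiffAt (hMopen.mem_nhds (Phi_ne_zero y))).differentiableAt (by simp)).comp y
      (differentiableAt_Phi y)
  -- the rotation as a continuous linear equivalence
  let eL : (Fin 3 → ℝ) ≃ₗ[ℝ] (Fin 3 → ℝ) :=
    LinearEquiv.ofLinear (Matrix.mulVecLin R) (Matrix.mulVecLin Rᵀ)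
      (by
        apply LinearMap.ext; intro v
        simp only [Matrix.mulVecLin_apply, LinearMap.comp_apply, Matrix.mulVec_mulVec, hR',
          Matrix.one_mulVec, LinearMap.id_coe, id_eq])
      (by
        apply LinearMap.ext; intro v
        simp only [Matrix.mulVecLin_apply, LinearMap.comp_apply, Matrix.mulVec_mulVec, hR,
          Matrix.one_mulVec, LinearMap.id_coe, id_eq])
  let eR : (Fin 3 → ℝ) ≃L[ℝ] (Fin 3 → ℝ) := eL.toContinuousLinearEquiv
  have heR : ∀ z, eR z = R.mulVec z := fun z => by
    simp [eR, eL]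
  have hae : ∀ᵐ x : ℝ × ℝ, x ∈ sQ Rᵀ := by
    have h := compl_sQ_null hQ
    exact MeasureTheory.ae_iff.mpr h
  have haeR : ∀ᵐ x : ℝ × ℝ, x ∈ sQ R := by
    have h := compl_sQ_null (Q := R) hR
    exact MeasureTheory.ae_iff.mpr h
  have hss : sQ ((Rᵀ)ᵀ) = sQ R := by rw [Matrix.transpose_transpose]
  have hCoV : ∀ g : ℝ × ℝ → (Fin 3 → ℝ),
      ∫ y in sQ ((Rᵀ)ᵀ), g y = ∫ x in sQ Rᵀ, |(DT Rᵀ x).det| • g (Tmap Rᵀ x) := by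
    intro g
    rw [← image_Tmap hQ hQ2]
    exact integral_image_eq_integral_abs_det_fderiv_smul volume (measurableSet_sQ Rᵀ)
      (fun x hx => (hasFDerivAt_Tmap hx).hasFDerivWithinAt) (injOn_Tmap hQ) g
  have habs : ∀ x ∈ sQ Rᵀ, |(DT Rᵀ x).det| = lam x ^ 2 / cQ Rᵀ x ^ 2 := by
    intro x hx
    rw [det_DT hQ hdetQ hx]
    exact abs_of_pos (div_pos (pow_pos (lam_pos x) 2) (pow_pos (cQ_pos hQ hx) 2))
  -- S part
  have hS : Sspin (fun x => R.mulVec (M (Rᵀ.mulVec (Phi x))))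
      = R.mulVec (Sspin fun x => M (Phi x)) := by
    unfold Sspin
    have h1 : (fun x : ℝ × ℝ => lam x ^ 2 • (R.mulVec (M (Rᵀ.mulVec (Phi x)))))
        = fun x => eR (lam x ^ 2 • M (Rᵀ.mulVec (Phi x))) := by
      funext x
      rw [_root_.map_smul, heR]
    rw [h1, eR.integral_comp_comm, ← heR]
    congr 1
    calc ∫ x : ℝ × ℝ, lam x ^ 2 • M (Rᵀ.mulVec (Phi x))
        = ∫ x in sQ Rᵀ, lam x ^ 2 • M (Rᵀ.mulVec (Phi x)) := by
          rw [Measure.restrict_eq_self_of_ae_mem hae]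
      _ = ∫ x in sQ Rᵀ, |(DT Rᵀ x).det| •
            (fun y => lam y ^ 2 • M (Phi y)) (Tmap Rᵀ x) := by
          refine setIntegral_congr_fun (measurableSet_sQ Rᵀ) (fun x hx => ?_)
          have hc := (cQ_pos hQ hx).ne'
          rw [habs x hx]
          show lam x ^ 2 • M (Rᵀ.mulVec (Phi x))
            = (lam x ^ 2 / cQ Rᵀ x ^ 2) • (lam (Tmap Rᵀ x) ^ 2 • M (Phi (Tmap Rᵀ x)))
          rw [lam_Tmap hQ hx, Phi_Tmap hQ hx, smul_smul]
          congr 1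
          field_simp
      _ = ∫ y in sQ ((Rᵀ)ᵀ), lam y ^ 2 • M (Phi y) := (hCoV (fun y => lam y ^ 2 • M (Phi y))).symm
      _ = ∫ y in sQ R, lam y ^ 2 • M (Phi y) := by rw [hss]
      _ = ∫ y : ℝ × ℝ, lam y ^ 2 • M (Phi y) := by
          rw [Measure.restrict_eq_self_of_ae_mem haeR]
  -- L part
  have hL : Lorb (fun x => R.mulVec (M (Rᵀ.mulVec (Phi x))))
      = R.mulVec (Lorb fun x => M (Phi x)) := by
    unfold Lorb
    calc ∫ x : ℝ × ℝ, vort (fun x => R.mulVec (M (Rᵀ.mulVec (Phi x)))) x • Phi x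
        = ∫ x in sQ Rᵀ, vort (fun x => R.mulVec (M (Rᵀ.mulVec (Phi x)))) x • Phi x := by
          rw [Measure.restrict_eq_self_of_ae_mem hae]
      _ = ∫ x in sQ Rᵀ, eR (|(DT Rᵀ x).det| •
            (fun y => vort (fun z => M (Phi z)) y • Phi y) (Tmap Rᵀ x)) := by
          refine setIntegral_congr_fun (measurableSet_sQ Rᵀ) (fun x hx => ?_)
          have hc := (cQ_pos hQ hx).ne'
          rw [habs x hx, vort_transform hR hRdet hM hx]
          show ((lam x ^ 2 / cQ Rᵀ x ^ 2) * vort (fun z => M (Phi z)) (Tmap Rᵀ x)) • Phi x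
            = eR ((lam x ^ 2 / cQ Rᵀ x ^ 2) •
                (vort (fun z => M (Phi z)) (Tmap Rᵀ x) • Phi (Tmap Rᵀ x)))
          rw [_root_.map_smul, _root_.map_smul, heR, Phi_Tmap hQ hx,
            Matrix.mulVec_mulVec, hR', Matrix.one_mulVec, smul_smul]
      _ = eR (∫ x in sQ Rᵀ, |(DT Rᵀ x).det| •
            (fun y => vort (fun z => M (Phi z)) y • Phi y) (Tmap Rᵀ x)) := by
          rw [eR.integral_comp_comm]
      _ = eR (∫ y in sQ ((Rᵀ)ᵀ), vort (fun z => M (Phi z)) y • Phi y) := by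
          rw [hCoV]
      _ = eR (∫ y in sQ R, vort (fun z => M (Phi z)) y • Phi y) := by rw [hss]
      _ = eR (∫ y : ℝ × ℝ, vort (fun z => M (Phi z)) y • Phi y) := by
          rw [Measure.restrict_eq_self_of_ae_mem haeR]
      _ = R.mulVec (∫ y : ℝ × ℝ, vort (fun z => M (Phi z)) y • Phi y) := heR _
  refine ⟨hS, hL, ?_⟩
  unfold Jmom
  rw [hS, hL, Matrix.mulVec_add]
end
end

section
/- Let κ > 0, let m : S² → S² be a smooth map, let R ∈ SO(3), and define m_R(y) = R m(R⁻¹ y) for y ∈ S². Then the energy is frame indifferent: E(m_R∘Φ) = E(m∘Φ). -/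
open MeasureTheory Filter

noncomputable section

set_option maxHeartbeats 1000000

namespace FrameIndiff

lemma denom_pos (x : ℝ × ℝ) : 0 < 1 + x.1 ^ 2 + x.2 ^ 2 := by positivity

lemma lam_pos (x : ℝ × ℝ) : 0 < lam x := by
  unfold lam; positivity

lemma Phi_zero (x : ℝ × ℝ) : Phi x 0 = 2 * x.1 / (1 + x.1 ^ 2 + x.2 ^ 2) := by
  simp [Phi, lam]; ring

lemma Phi_one (x : ℝ × ℝ) : Phi x 1 = 2 * x.2 / (1 + x.1 ^ 2 + x.2 ^ 2) := by
  simp [Phi, lam]; ring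

lemma Phi_two (x : ℝ × ℝ) : Phi x 2 = (1 - x.1 ^ 2 - x.2 ^ 2) / (1 + x.1 ^ 2 + x.2 ^ 2) := by
  have h := (denom_pos x).ne'
  simp [Phi, lam]; field_simp; ring

lemma dot3_Phi (x : ℝ × ℝ) : dot3 (Phi x) (Phi x) = 1 := by
  have h := (denom_pos x).ne'
  rw [dot3, Phi_zero, Phi_one, Phi_two]
  field_simp; ring

lemma one_add_Phi_two (x : ℝ × ℝ) : 1 + Phi x 2 = lam x := by
  have h := (denom_pos x).ne'
  rw [Phi_two, lam]; field_simp; ring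

lemma Phi_two_ne (x : ℝ × ℝ) : Phi x 2 ≠ -1 := by
  intro h
  have := one_add_Phi_two x
  rw [h] at this
  have := lam_pos x
  linarith

lemma Phi_ne_zero (x : ℝ × ℝ) : Phi x ≠ 0 := by
  intro h
  have h1 := dot3_Phi x
  rw [h] at h1
  simp [dot3] at h1

/-- Inverse stereographic projection. -/
def Pst (y : Fin 3 → ℝ) : ℝ × ℝ := (y 0 / (1 + y 2), y 1 / (1 + y 2))

lemma Pst_Phi (x : ℝ × ℝ) : Pst (Phi x) = x := by
  have h := (lam_pos x).ne'
  have h2 : (1 : ℝ) + Phi x 2 = lam x := one_add_Phi_two x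
  unfold Pst
  rw [h2]
  have e0 : Phi x 0 = lam x * x.1 := by simp [Phi]
  have e1 : Phi x 1 = lam x * x.2 := by simp [Phi]
  rw [e0, e1]
  field_simp

lemma Phi_injective : Function.Injective Phi := fun a b h => by
  rw [← Pst_Phi a, ← Pst_Phi b, h]

lemma Phi_Pst {y : Fin 3 → ℝ} (hy : dot3 y y = 1) (hy2 : y 2 ≠ -1) : Phi (Pst y) = y := by
  have ht : (1 : ℝ) + y 2 ≠ 0 := fun h => hy2 (by linarith)
  have hsum : y 0 ^ 2 + y 1 ^ 2 = 1 - y 2 ^ 2 := by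
    rw [dot3] at hy; nlinarith [hy]
  have hP1 : (Pst y).1 = y 0 / (1 + y 2) := rfl
  have hP2 : (Pst y).2 = y 1 / (1 + y 2) := rfl
  have hden : 1 + (Pst y).1 ^ 2 + (Pst y).2 ^ 2 = 2 / (1 + y 2) := by
    rw [hP1, hP2]
    field_simp
    linear_combination hsum
  funext i
  fin_cases i
  · rw [show ((⟨0, by norm_num⟩ : Fin 3)) = (0 : Fin 3) from rfl, Phi_zero, hden, hP1]
    field_simp
  · rw [show ((⟨1, by norm_num⟩ : Fin 3)) = (1 : Fin 3) from rfl, Phi_one, hden, hP2]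
    field_simp
  · rw [show ((⟨2, by norm_num⟩ : Fin 3)) = (2 : Fin 3) from rfl, Phi_two, hden, hP1, hP2]
    rw [div_eq_iff (by positivity)]
    field_simp
    linear_combination (-1 : ℝ) * hsum

end FrameIndiff

namespace FrameIndiff
open Matrix

lemma dot3_mulVec_transpose (Q : Matrix (Fin 3) (Fin 3) ℝ) (u v : Fin 3 → ℝ) :
    dot3 (Q.mulVec u) v = dot3 u (Qᵀ.mulVec v) := by
  simp [dot3, Matrix.mulVec, dotProduct, Fin.sum_univ_three, Matrix.transpose_apply]
  ring

lemma dot3_mulVec_orth {Q : Matrix (Fin 3) (Fin 3) ℝ} (hQ : Qᵀ * Q = 1) (u v : Fin 3 → ℝ) :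
    dot3 (Q.mulVec u) (Q.mulVec v) = dot3 u v := by
  have h : ∀ i j, (Qᵀ * Q) i j = (1 : Matrix (Fin 3) (Fin 3) ℝ) i j := fun i j => by rw [hQ]
  simp only [Matrix.mul_apply, Matrix.transpose_apply, Fin.sum_univ_three] at h
  have h00 := h 0 0; have h01 := h 0 1; have h02 := h 0 2
  have h10 := h 1 0; have h11 := h 1 1; have h12 := h 1 2
  have h20 := h 2 0; have h21 := h 2 1; have h22 := h 2 2
  simp [Matrix.one_apply] at h00 h01 h02 h10 h11 h12 h20 h21 h22
  simp only [dot3, Matrix.mulVec, dotProduct, Fin.sum_univ_three]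
  linear_combination u 0 * v 0 * h00 + u 0 * v 1 * h01 + u 0 * v 2 * h02 +
    u 1 * v 0 * h10 + u 1 * v 1 * h11 + u 1 * v 2 * h12 +
    u 2 * v 0 * h20 + u 2 * v 1 * h21 + u 2 * v 2 * h22

/-- `mulVec` as a continuous linear map. -/
def mvCLM (Q : Matrix (Fin 3) (Fin 3) ℝ) : (Fin 3 → ℝ) →L[ℝ] (Fin 3 → ℝ) :=
  LinearMap.toContinuousLinearMap (Matrix.mulVecLin Q)

@[simp] lemma mvCLM_apply (Q : Matrix (Fin 3) (Fin 3) ℝ) (y : Fin 3 → ℝ) :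
    mvCLM Q y = Q.mulVec y := rfl

lemma dot3_bilin (a b c d : ℝ) (P Q P' Q' : Fin 3 → ℝ) :
    dot3 (a • P + b • Q) (c • P' + d • Q') =
      a * c * dot3 P P' + a * d * dot3 P Q' + b * c * dot3 Q P' + b * d * dot3 Q Q' := by
  simp [dot3, Pi.add_apply, Pi.smul_apply, smul_eq_mul]
  ring

lemma clm_apply_pq (T : (ℝ × ℝ) →L[ℝ] (Fin 3 → ℝ)) (p q : ℝ) :
    T (p, q) = p • T (1, 0) + q • T (0, 1) := by
  have h : ((p, q) : ℝ × ℝ) = p • ((1 : ℝ), (0 : ℝ)) + q • ((0 : ℝ), (1 : ℝ)) := by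
    simp [Prod.ext_iff]
  rw [h, map_add, _root_.map_smul, _root_.map_smul]

lemma clm_apply_pq' (T : (ℝ × ℝ) →L[ℝ] (ℝ × ℝ)) (p q : ℝ) :
    T (p, q) = p • T (1, 0) + q • T (0, 1) := by
  have h : ((p, q) : ℝ × ℝ) = p • ((1 : ℝ), (0 : ℝ)) + q • ((0 : ℝ), (1 : ℝ)) := by
    simp [Prod.ext_iff]
  rw [h, map_add, _root_.map_smul, _root_.map_smul]

lemma pd1_eq {u : ℝ × ℝ → Fin 3 → ℝ} {x : ℝ × ℝ} (hu : DifferentiableAt ℝ u x)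
    {i : Fin 3} {d : ℝ} (h : HasDerivAt (fun t => u (t, x.2) i) d x.1) : pd1 u x i = d := by
  have hl : HasDerivAt (fun t : ℝ => ((t, x.2) : ℝ × ℝ)) (1, 0) x.1 :=
    (hasDerivAt_id x.1).prodMk (hasDerivAt_const x.1 x.2)
  have h2 : HasDerivAt (fun t => u (t, x.2)) (fderiv ℝ u x (1, 0)) x.1 := by
    have := hu.hasFDerivAt.comp_hasDerivAt x.1 hl
    simpa [Function.comp_def] using this
  have h3 : HasDerivAt (fun t => u (t, x.2) i) (fderiv ℝ u x (1, 0) i) x.1 := by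
    have := (ContinuousLinearMap.proj (R := ℝ) (φ := fun _ : Fin 3 => ℝ) i).hasFDerivAt.comp_hasDerivAt x.1 h2
    simpa [Function.comp_def] using this
  show fderiv ℝ u x (1, 0) i = d
  exact h3.unique h

lemma pd2_eq {u : ℝ × ℝ → Fin 3 → ℝ} {x : ℝ × ℝ} (hu : DifferentiableAt ℝ u x)
    {i : Fin 3} {d : ℝ} (h : HasDerivAt (fun t => u (x.1, t) i) d x.2) : pd2 u x i = d := by
  have hl : HasDerivAt (fun t : ℝ => ((x.1, t) : ℝ × ℝ)) (0, 1) x.2 :=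
    (hasDerivAt_const x.2 x.1).prodMk (hasDerivAt_id x.2)
  have h2 : HasDerivAt (fun t => u (x.1, t)) (fderiv ℝ u x (0, 1)) x.2 := by
    have := hu.hasFDerivAt.comp_hasDerivAt x.2 hl
    simpa [Function.comp_def] using this
  have h3 : HasDerivAt (fun t => u (x.1, t) i) (fderiv ℝ u x (0, 1) i) x.2 := by
    have := (ContinuousLinearMap.proj (R := ℝ) (φ := fun _ : Fin 3 => ℝ) i).hasFDerivAt.comp_hasDerivAt x.2 h2
    simpa [Function.comp_def] using this
  show fderiv ℝ u x (0, 1) i = d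
  exact h3.unique h

end FrameIndiff

namespace FrameIndiff
lemma dot3_comm (a b : Fin 3 → ℝ) : dot3 a b = dot3 b a := by
  simp [dot3]; ring
end FrameIndiff

namespace FrameIndiff

lemma diffAt_div {f g : ℝ × ℝ → ℝ} {x : ℝ × ℝ} (hf : DifferentiableAt ℝ f x)
    (hg : DifferentiableAt ℝ g x) (h : g x ≠ 0) :
    DifferentiableAt ℝ (fun z => f z / g z) x := by
  simpa [div_eq_mul_inv] using hf.fun_mul (hg.fun_inv h)

lemma diff_denom (x : ℝ × ℝ) : DifferentiableAt ℝ (fun z : ℝ × ℝ => 1 + z.1 ^ 2 + z.2 ^ 2) x := by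
  fun_prop

lemma diff_Phi (x : ℝ × ℝ) : DifferentiableAt ℝ Phi x := by
  have hne := (denom_pos x).ne'
  rw [differentiableAt_pi]
  intro i
  fin_cases i
  · have he : (fun z : ℝ × ℝ => Phi z 0) = fun z => 2 * z.1 / (1 + z.1 ^ 2 + z.2 ^ 2) :=
      funext fun z => Phi_zero z
    rw [show ((⟨0, by norm_num⟩ : Fin 3)) = (0 : Fin 3) from rfl, he]
    exact diffAt_div (by fun_prop) (diff_denom x) hne
  · have he : (fun z : ℝ × ℝ => Phi z 1) = fun z => 2 * z.2 / (1 + z.1 ^ 2 + z.2 ^ 2) :=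
      funext fun z => Phi_one z
    rw [show ((⟨1, by norm_num⟩ : Fin 3)) = (1 : Fin 3) from rfl, he]
    exact diffAt_div (by fun_prop) (diff_denom x) hne
  · have he : (fun z : ℝ × ℝ => Phi z 2) = fun z => (1 - z.1 ^ 2 - z.2 ^ 2) / (1 + z.1 ^ 2 + z.2 ^ 2) :=
      funext fun z => Phi_two z
    rw [show ((⟨2, by norm_num⟩ : Fin 3)) = (2 : Fin 3) from rfl, he]
    exact diffAt_div (by fun_prop) (diff_denom x) hne

lemma cont_Phi : Continuous Phi :=
  continuous_iff_continuousAt.mpr fun x => (diff_Phi x).continuousAt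

lemma hasDerivAt_den1 (x : ℝ × ℝ) :
    HasDerivAt (fun t : ℝ => 1 + t ^ 2 + x.2 ^ 2) (2 * x.1) x.1 := by
  have h : HasDerivAt (fun t : ℝ => t ^ 2) (2 * x.1) x.1 := by
    simpa using hasDerivAt_pow 2 x.1
  simpa using (h.const_add 1).add_const (x.2 ^ 2)

lemma hasDerivAt_den2 (x : ℝ × ℝ) :
    HasDerivAt (fun t : ℝ => 1 + x.1 ^ 2 + t ^ 2) (2 * x.2) x.2 := by
  have h : HasDerivAt (fun t : ℝ => t ^ 2) (2 * x.2) x.2 := by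
    simpa using hasDerivAt_pow 2 x.2
  simpa using h.const_add (1 + x.1 ^ 2)

lemma pd1_Phi_0 (x : ℝ × ℝ) :
    pd1 Phi x 0 = 2 * (1 - x.1 ^ 2 + x.2 ^ 2) / (1 + x.1 ^ 2 + x.2 ^ 2) ^ 2 := by
  have hne := (denom_pos x).ne'
  refine pd1_eq (diff_Phi x) ?_
  have hfun : (fun t : ℝ => Phi (t, x.2) 0) = fun t => 2 * t / (1 + t ^ 2 + x.2 ^ 2) :=
    funext fun t => Phi_zero (t, x.2)
  rw [hfun]
  have hnum : HasDerivAt (fun t : ℝ => 2 * t) 2 x.1 := by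
    simpa using (hasDerivAt_id x.1).const_mul 2
  have := hnum.fun_div (hasDerivAt_den1 x) hne
  refine this.congr_deriv ?_
  ring

lemma pd1_Phi_1 (x : ℝ × ℝ) :
    pd1 Phi x 1 = -4 * x.1 * x.2 / (1 + x.1 ^ 2 + x.2 ^ 2) ^ 2 := by
  have hne := (denom_pos x).ne'
  refine pd1_eq (diff_Phi x) ?_
  have hfun : (fun t : ℝ => Phi (t, x.2) 1) = fun t => 2 * x.2 / (1 + t ^ 2 + x.2 ^ 2) :=
    funext fun t => Phi_one (t, x.2)
  rw [hfun]
  have hnum : HasDerivAt (fun _ : ℝ => 2 * x.2) 0 x.1 := hasDerivAt_const _ _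
  have := hnum.fun_div (hasDerivAt_den1 x) hne
  refine this.congr_deriv ?_
  ring

lemma pd1_Phi_2 (x : ℝ × ℝ) :
    pd1 Phi x 2 = -4 * x.1 / (1 + x.1 ^ 2 + x.2 ^ 2) ^ 2 := by
  have hne := (denom_pos x).ne'
  refine pd1_eq (diff_Phi x) ?_
  have hfun : (fun t : ℝ => Phi (t, x.2) 2) = fun t => (1 - t ^ 2 - x.2 ^ 2) / (1 + t ^ 2 + x.2 ^ 2) :=
    funext fun t => Phi_two (t, x.2)
  rw [hfun]
  have hnum : HasDerivAt (fun t : ℝ => 1 - t ^ 2 - x.2 ^ 2) (-(2 * x.1)) x.1 := by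
    have h : HasDerivAt (fun t : ℝ => t ^ 2) (2 * x.1) x.1 := by
      simpa using hasDerivAt_pow 2 x.1
    simpa using ((h.const_sub 1).sub_const (x.2 ^ 2))
  have := hnum.fun_div (hasDerivAt_den1 x) hne
  refine this.congr_deriv ?_
  ring

lemma pd2_Phi_0 (x : ℝ × ℝ) :
    pd2 Phi x 0 = -4 * x.1 * x.2 / (1 + x.1 ^ 2 + x.2 ^ 2) ^ 2 := by
  have hne := (denom_pos x).ne'
  refine pd2_eq (diff_Phi x) ?_
  have hfun : (fun t : ℝ => Phi (x.1, t) 0) = fun t => 2 * x.1 / (1 + x.1 ^ 2 + t ^ 2) :=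
    funext fun t => Phi_zero (x.1, t)
  rw [hfun]
  have hnum : HasDerivAt (fun _ : ℝ => 2 * x.1) 0 x.2 := hasDerivAt_const _ _
  have := hnum.fun_div (hasDerivAt_den2 x) hne
  refine this.congr_deriv ?_
  ring

lemma pd2_Phi_1 (x : ℝ × ℝ) :
    pd2 Phi x 1 = 2 * (1 + x.1 ^ 2 - x.2 ^ 2) / (1 + x.1 ^ 2 + x.2 ^ 2) ^ 2 := by
  have hne := (denom_pos x).ne'
  refine pd2_eq (diff_Phi x) ?_
  have hfun : (fun t : ℝ => Phi (x.1, t) 1) = fun t => 2 * t / (1 + x.1 ^ 2 + t ^ 2) :=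
    funext fun t => Phi_one (x.1, t)
  rw [hfun]
  have hnum : HasDerivAt (fun t : ℝ => 2 * t) 2 x.2 := by
    simpa using (hasDerivAt_id x.2).const_mul 2
  have := hnum.fun_div (hasDerivAt_den2 x) hne
  refine this.congr_deriv ?_
  ring

lemma pd2_Phi_2 (x : ℝ × ℝ) :
    pd2 Phi x 2 = -4 * x.2 / (1 + x.1 ^ 2 + x.2 ^ 2) ^ 2 := by
  have hne := (denom_pos x).ne'
  refine pd2_eq (diff_Phi x) ?_
  have hfun : (fun t : ℝ => Phi (x.1, t) 2) = fun t => (1 - x.1 ^ 2 - t ^ 2) / (1 + x.1 ^ 2 + t ^ 2) :=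
    funext fun t => Phi_two (x.1, t)
  rw [hfun]
  have hnum : HasDerivAt (fun t : ℝ => 1 - x.1 ^ 2 - t ^ 2) (-(2 * x.2)) x.2 := by
    have h : HasDerivAt (fun t : ℝ => t ^ 2) (2 * x.2) x.2 := by
      simpa using hasDerivAt_pow 2 x.2
    simpa using ((h.const_sub (1 - x.1 ^ 2)))
  have := hnum.fun_div (hasDerivAt_den2 x) hne
  refine this.congr_deriv ?_
  ring

lemma conf11 (x : ℝ × ℝ) : dot3 (pd1 Phi x) (pd1 Phi x) = lam x ^ 2 := by
  have hne := (denom_pos x).ne'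
  rw [dot3, pd1_Phi_0, pd1_Phi_1, pd1_Phi_2, lam]
  field_simp
  ring

lemma conf22 (x : ℝ × ℝ) : dot3 (pd2 Phi x) (pd2 Phi x) = lam x ^ 2 := by
  have hne := (denom_pos x).ne'
  rw [dot3, pd2_Phi_0, pd2_Phi_1, pd2_Phi_2, lam]
  field_simp
  ring

lemma conf12 (x : ℝ × ℝ) : dot3 (pd1 Phi x) (pd2 Phi x) = 0 := by
  have hne := (denom_pos x).ne'
  rw [dot3, pd1_Phi_0, pd1_Phi_1, pd1_Phi_2, pd2_Phi_0, pd2_Phi_1, pd2_Phi_2]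
  field_simp
  ring

end FrameIndiff

namespace FrameIndiff
open Matrix

/-- The plane transformation induced by `Rᵀ` via stereographic projection. -/
def psiR (R : Matrix (Fin 3) (Fin 3) ℝ) (x : ℝ × ℝ) : ℝ × ℝ := Pst (Rᵀ.mulVec (Phi x))

/-- The (co-null) open set where `psiR` is smooth. -/
def UR (R : Matrix (Fin 3) (Fin 3) ℝ) : Set (ℝ × ℝ) := {x | (Rᵀ.mulVec (Phi x)) 2 ≠ -1}

variable {R : Matrix (Fin 3) (Fin 3) ℝ}

lemma sigma_unit (hR : Rᵀ * R = 1) (x : ℝ × ℝ) :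
    dot3 (Rᵀ.mulVec (Phi x)) (Rᵀ.mulVec (Phi x)) = 1 := by
  rw [dot3_mulVec_orth (by rw [Matrix.transpose_transpose]; exact mul_eq_one_comm.mp hR)]
  exact dot3_Phi x

lemma UR_open : IsOpen (UR R) := by
  have hc : Continuous fun x : ℝ × ℝ => (Rᵀ.mulVec (Phi x)) 2 :=
    (continuous_apply 2).comp ((mvCLM Rᵀ).continuous.comp cont_Phi)
  exact IsOpen.preimage hc (isOpen_compl_singleton (x := (-1 : ℝ)))

lemma Phi_psiR (hR : Rᵀ * R = 1) {x : ℝ × ℝ} (hx : x ∈ UR R) :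
    Phi (psiR R x) = Rᵀ.mulVec (Phi x) :=
  Phi_Pst (sigma_unit hR x) hx

lemma psiR_diff {x : ℝ × ℝ} (hx : x ∈ UR R) : DifferentiableAt ℝ (psiR R) x := by
  have hσd : DifferentiableAt ℝ (fun z => Rᵀ.mulVec (Phi z)) x :=
    ((mvCLM Rᵀ).differentiableAt).comp x (diff_Phi x)
  have h0 : DifferentiableAt ℝ (fun z => (Rᵀ.mulVec (Phi z)) 0) x := (differentiableAt_pi.mp hσd) 0
  have h1 : DifferentiableAt ℝ (fun z => (Rᵀ.mulVec (Phi z)) 1) x := (differentiableAt_pi.mp hσd) 1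
  have h2 : DifferentiableAt ℝ (fun z => (Rᵀ.mulVec (Phi z)) 2) x := (differentiableAt_pi.mp hσd) 2
  have hden : DifferentiableAt ℝ (fun z => 1 + (Rᵀ.mulVec (Phi z)) 2) x :=
    (differentiableAt_const (1 : ℝ)).add h2
  have hne : 1 + (Rᵀ.mulVec (Phi x)) 2 ≠ 0 := fun h => hx (by linarith)
  exact (diffAt_div h0 hden hne).prodMk (diffAt_div h1 hden hne)

lemma psiR_inj (hR : Rᵀ * R = 1) : Set.InjOn (psiR R) (UR R) := by
  have hRR : R * Rᵀ = 1 := mul_eq_one_comm.mp hR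
  intro x hx x' hx' h
  have h1 : Phi (psiR R x) = Phi (psiR R x') := by rw [h]
  rw [Phi_psiR hR hx, Phi_psiR hR hx'] at h1
  have h2 : Phi x = Phi x' := by
    have := congrArg R.mulVec h1
    simpa [Matrix.mulVec_mulVec, hRR, Matrix.one_mulVec] using this
  exact Phi_injective h2

lemma psiR_img (hR : Rᵀ * R = 1) : psiR R '' UR R = UR Rᵀ := by
  have hRR : R * Rᵀ = 1 := mul_eq_one_comm.mp hR
  ext y; constructor
  · rintro ⟨x, hx, rfl⟩
    show ((Rᵀ)ᵀ.mulVec (Phi (psiR R x))) 2 ≠ -1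
    rw [Phi_psiR hR hx, Matrix.transpose_transpose]
    rw [Matrix.mulVec_mulVec, hRR, Matrix.one_mulVec]
    exact Phi_two_ne x
  · intro hy
    have hy' : (R.mulVec (Phi y)) 2 ≠ -1 := by
      have h := hy
      rwa [UR, Set.mem_setOf_eq, Matrix.transpose_transpose] at h
    have h1 : dot3 (R.mulVec (Phi y)) (R.mulVec (Phi y)) = 1 := by
      rw [dot3_mulVec_orth hR]; exact dot3_Phi y
    have h2 : Phi (Pst (R.mulVec (Phi y))) = R.mulVec (Phi y) := Phi_Pst h1 hy'
    refine ⟨Pst (R.mulVec (Phi y)), ?_, ?_⟩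
    · show (Rᵀ.mulVec (Phi (Pst (R.mulVec (Phi y))))) 2 ≠ -1
      rw [h2, Matrix.mulVec_mulVec, hR, Matrix.one_mulVec]
      exact Phi_two_ne y
    · show Pst (Rᵀ.mulVec (Phi (Pst (R.mulVec (Phi y))))) = y
      rw [h2, Matrix.mulVec_mulVec, hR, Matrix.one_mulVec, Pst_Phi]

lemma unit_third_eq {y y' : Fin 3 → ℝ} (hy : dot3 y y = 1) (hy' : dot3 y' y' = 1)
    (h2 : y 2 = -1) (h2' : y' 2 = -1) : y = y' := by
  rw [dot3] at hy hy'
  have e0 : y 0 = 0 := by nlinarith [sq_nonneg (y 0), sq_nonneg (y 1)]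
  have e1 : y 1 = 0 := by nlinarith [sq_nonneg (y 0), sq_nonneg (y 1)]
  have e0' : y' 0 = 0 := by nlinarith [sq_nonneg (y' 0), sq_nonneg (y' 1)]
  have e1' : y' 1 = 0 := by nlinarith [sq_nonneg (y' 0), sq_nonneg (y' 1)]
  funext i
  fin_cases i
  · rw [show ((⟨0, by norm_num⟩ : Fin 3)) = (0 : Fin 3) from rfl, e0, e0']
  · rw [show ((⟨1, by norm_num⟩ : Fin 3)) = (1 : Fin 3) from rfl, e1, e1']
  · rw [show ((⟨2, by norm_num⟩ : Fin 3)) = (2 : Fin 3) from rfl, h2, h2']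

lemma UR_compl_null (hR : Rᵀ * R = 1) : MeasureTheory.volume (UR R)ᶜ = 0 := by
  have hRR : R * Rᵀ = 1 := mul_eq_one_comm.mp hR
  have hsub : (UR R)ᶜ.Subsingleton := by
    intro x hx x' hx'
    simp only [UR, Set.mem_compl_iff, Set.mem_setOf_eq, not_not] at hx hx'
    have h1 : Rᵀ.mulVec (Phi x) = Rᵀ.mulVec (Phi x') :=
      unit_third_eq (sigma_unit hR x) (sigma_unit hR x') hx hx'
    have h2 : Phi x = Phi x' := by
      have := congrArg R.mulVec h1
      simpa [Matrix.mulVec_mulVec, hRR, Matrix.one_mulVec] using this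
    exact Phi_injective h2
  exact hsub.measure_zero MeasureTheory.volume

lemma ae_mem_UR (hR : Rᵀ * R = 1) : ∀ᵐ x : ℝ × ℝ, x ∈ UR R := by
  rw [MeasureTheory.ae_iff]
  exact UR_compl_null hR

lemma det_clm_eq (T : (ℝ × ℝ) →L[ℝ] (ℝ × ℝ)) :
    T.det = (T (1, 0)).1 * (T (0, 1)).2 - (T (0, 1)).1 * (T (1, 0)).2 := by
  have h : T.det = LinearMap.det (T : (ℝ × ℝ) →ₗ[ℝ] (ℝ × ℝ)) := rfl
  rw [h, ← LinearMap.det_toMatrix (Module.Basis.finTwoProd ℝ), Matrix.det_fin_two]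
  simp [LinearMap.toMatrix_apply, Module.Basis.finTwoProd_zero, Module.Basis.finTwoProd_one,
    Module.Basis.coe_finTwoProd_repr]

end FrameIndiff

namespace FrameIndiff
open Matrix MeasureTheory

variable {R : Matrix (Fin 3) (Fin 3) ℝ}

set_option maxHeartbeats 1000000 in
lemma key_pointwise (hR : Rᵀ * R = 1) (M : (Fin 3 → ℝ) → Fin 3 → ℝ)
    (hM : ∀ z : Fin 3 → ℝ, z ≠ 0 → DifferentiableAt ℝ M z) (κ : ℝ)
    {x : ℝ × ℝ} (hx : x ∈ UR R) :
    dot3 (pd1 (fun z => R.mulVec (M (Rᵀ.mulVec (Phi z)))) x)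
        (pd1 (fun z => R.mulVec (M (Rᵀ.mulVec (Phi z)))) x)
      + dot3 (pd2 (fun z => R.mulVec (M (Rᵀ.mulVec (Phi z)))) x)
          (pd2 (fun z => R.mulVec (M (Rᵀ.mulVec (Phi z)))) x)
      + κ * (1 - dot3 (R.mulVec (M (Rᵀ.mulVec (Phi x)))) (Phi x) ^ 2) * lam x ^ 2
    = |(fderiv ℝ (psiR R) x).det| •
      (dot3 (pd1 (fun w => M (Phi w)) (psiR R x)) (pd1 (fun w => M (Phi w)) (psiR R x))
        + dot3 (pd2 (fun w => M (Phi w)) (psiR R x)) (pd2 (fun w => M (Phi w)) (psiR R x))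
        + κ * (1 - dot3 (M (Phi (psiR R x))) (Phi (psiR R x)) ^ 2) * lam (psiR R x) ^ 2) := by
  have hRR : R * Rᵀ = 1 := mul_eq_one_comm.mp hR
  have hRT : (Rᵀ)ᵀ * Rᵀ = 1 := by rw [Matrix.transpose_transpose]; exact hRR
  have hT := (psiR_diff hx).hasFDerivAt
  set y := psiR R x with hy
  set T := fderiv ℝ (psiR R) x with hTdef
  set a := (T (1, 0)).1 with hadef
  set b := (T (1, 0)).2 with hbdef
  set c := (T (0, 1)).1 with hcdef
  set d := (T (0, 1)).2 with hddef
  -- chain rule identity Φ ∘ ψ = Rᵀ ∘ Φ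
  have hch1 : HasFDerivAt (fun z => Phi (psiR R z)) ((fderiv ℝ Phi y).comp T) x :=
    (diff_Phi y).hasFDerivAt.comp (f := psiR R) x hT
  have hch2 : HasFDerivAt (fun z => (mvCLM Rᵀ) (Phi z)) ((mvCLM Rᵀ).comp (fderiv ℝ Phi x)) x :=
    (mvCLM Rᵀ).hasFDerivAt.comp x (diff_Phi x).hasFDerivAt
  have hev : (fun z => Phi (psiR R z)) =ᶠ[nhds x] fun z => (mvCLM Rᵀ) (Phi z) := by
    filter_upwards [UR_open.mem_nhds hx] with z hz
    rw [mvCLM_apply]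
    exact Phi_psiR hR hz
  have hder_eq : (fderiv ℝ Phi y).comp T = (mvCLM Rᵀ).comp (fderiv ℝ Phi x) := by
    rw [← hch1.fderiv, ← hch2.fderiv]
    exact hev.fderiv_eq
  have happ : ∀ p q : ℝ, fderiv ℝ Phi y (T (p, q)) = Rᵀ.mulVec (fderiv ℝ Phi x (p, q)) := by
    intro p q
    have h := congrArg (fun L : (ℝ × ℝ) →L[ℝ] (Fin 3 → ℝ) => L (p, q)) hder_eq
    simpa using h
  have hdotPhi : ∀ p q p' q' : ℝ,
      dot3 (fderiv ℝ Phi y (p, q)) (fderiv ℝ Phi y (p', q')) = (p * p' + q * q') * lam y ^ 2 := by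
    intro p q p' q'
    rw [clm_apply_pq (fderiv ℝ Phi y) p q, clm_apply_pq (fderiv ℝ Phi y) p' q',
      show fderiv ℝ Phi y (1, 0) = pd1 Phi y from rfl,
      show fderiv ℝ Phi y (0, 1) = pd2 Phi y from rfl,
      dot3_bilin, conf11, conf22, conf12, dot3_comm (pd2 Phi y) (pd1 Phi y), conf12]
    ring
  have hDot : ∀ p q p' q' : ℝ,
      dot3 (fderiv ℝ Phi y (T (p, q))) (fderiv ℝ Phi y (T (p', q'))) =
        dot3 (fderiv ℝ Phi x (p, q)) (fderiv ℝ Phi x (p', q')) := by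
    intro p q p' q'
    rw [happ, happ, dot3_mulVec_orth hRT]
  have ha : (a * a + b * b) * lam y ^ 2 = lam x ^ 2 := by
    have h1 : dot3 (fderiv ℝ Phi y (T (1, 0))) (fderiv ℝ Phi y (T (1, 0)))
        = (a * a + b * b) * lam y ^ 2 := hdotPhi a b a b
    rw [hDot 1 0 1 0, show fderiv ℝ Phi x (1, 0) = pd1 Phi x from rfl, conf11] at h1
    exact h1.symm
  have hc : (c * c + d * d) * lam y ^ 2 = lam x ^ 2 := by
    have h1 : dot3 (fderiv ℝ Phi y (T (0, 1))) (fderiv ℝ Phi y (T (0, 1)))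
        = (c * c + d * d) * lam y ^ 2 := hdotPhi c d c d
    rw [hDot 0 1 0 1, show fderiv ℝ Phi x (0, 1) = pd2 Phi x from rfl, conf22] at h1
    exact h1.symm
  have hcross : (a * c + b * d) * lam y ^ 2 = 0 := by
    have h1 : dot3 (fderiv ℝ Phi y (T (1, 0))) (fderiv ℝ Phi y (T (0, 1)))
        = (a * c + b * d) * lam y ^ 2 := hdotPhi a b c d
    rw [hDot 1 0 0 1, show fderiv ℝ Phi x (1, 0) = pd1 Phi x from rfl,
      show fderiv ℝ Phi x (0, 1) = pd2 Phi x from rfl, conf12] at h1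
    exact h1.symm
  have hly := lam_pos y
  have hlx := lam_pos x
  have hly2 : lam y ^ 2 ≠ 0 := by positivity
  have hcross' : a * c + b * d = 0 := (mul_eq_zero.mp hcross).resolve_right hly2
  have hk0 : 0 < a * a + b * b := by
    have h1 : 0 < lam x ^ 2 := by positivity
    have h2 : 0 < lam y ^ 2 := by positivity
    nlinarith [ha]
  set s := (a * d - b * c) / (a * a + b * b) with hsdef
  have hcs : c = -(s * b) := by
    rw [hsdef]
    field_simp [(show 0 < a ^ 2 + b ^ 2 by nlinarith).ne']
    linear_combination a * hcross'
  have hds : d = s * a := by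
    rw [hsdef]
    field_simp [(show 0 < a ^ 2 + b ^ 2 by nlinarith).ne']
    linear_combination b * hcross'
  have hs2 : s ^ 2 = 1 := by
    have hcc : c * c + d * d = a * a + b * b := by
      have h2 : 0 < lam y ^ 2 := by positivity
      nlinarith [ha, hc]
    rw [hcs, hds] at hcc
    have h3 : s ^ 2 * (a * a + b * b) = 1 * (a * a + b * b) := by linear_combination hcc
    exact mul_right_cancel₀ hk0.ne' h3
  have hdet : T.det = a * d - b * c := by
    rw [det_clm_eq]; ring
  have habs : |T.det| = a * a + b * b := by
    rw [hdet, hcs, hds, show a * (s * a) - b * -(s * b) = s * (a * a + b * b) from by ring,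
      abs_mul]
    have h4 : |s| ^ 2 = 1 := by rw [sq_abs]; exact hs2
    have h5 : (|s| - 1) * (|s| + 1) = 0 := by linear_combination h4
    have h2 : |s| = 1 := by
      rcases mul_eq_zero.mp h5 with h | h
      · linarith
      · nlinarith [abs_nonneg s]
    rw [h2, one_mul, abs_of_pos hk0]
  -- derivative of the rotated field
  have hMd : DifferentiableAt ℝ M (Phi y) := hM (Phi y) (Phi_ne_zero y)
  have hvd : DifferentiableAt ℝ (fun z => M (Phi z)) y := hMd.comp y (diff_Phi y)
  have hch3 : HasFDerivAt (fun z => (mvCLM R) (M (Phi (psiR R z))))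
      ((mvCLM R).comp ((fderiv ℝ (fun z => M (Phi z)) y).comp T)) x :=
    (mvCLM R).hasFDerivAt.comp x (hvd.hasFDerivAt.comp (f := psiR R) x hT)
  have hev2 : (fun z => R.mulVec (M (Rᵀ.mulVec (Phi z)))) =ᶠ[nhds x]
      (fun z => (mvCLM R) (M (Phi (psiR R z)))) := by
    filter_upwards [UR_open.mem_nhds hx] with z hz
    rw [mvCLM_apply, Phi_psiR hR hz]
  have hfuR : fderiv ℝ (fun z => R.mulVec (M (Rᵀ.mulVec (Phi z)))) x =
      (mvCLM R).comp ((fderiv ℝ (fun z => M (Phi z)) y).comp T) := by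
    rw [hev2.fderiv_eq]
    exact hch3.fderiv
  have hpd1 : pd1 (fun z => R.mulVec (M (Rᵀ.mulVec (Phi z)))) x =
      R.mulVec (a • pd1 (fun z => M (Phi z)) y + b • pd2 (fun z => M (Phi z)) y) := by
    show fderiv ℝ (fun z => R.mulVec (M (Rᵀ.mulVec (Phi z)))) x (1, 0) = _
    rw [hfuR]
    simp only [ContinuousLinearMap.comp_apply, mvCLM_apply]
    rw [show T (1, 0) = (a, b) from rfl, clm_apply_pq (fderiv ℝ (fun z => M (Phi z)) y) a b]
    rfl
  have hpd2 : pd2 (fun z => R.mulVec (M (Rᵀ.mulVec (Phi z)))) x =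
      R.mulVec (c • pd1 (fun z => M (Phi z)) y + d • pd2 (fun z => M (Phi z)) y) := by
    show fderiv ℝ (fun z => R.mulVec (M (Rᵀ.mulVec (Phi z)))) x (0, 1) = _
    rw [hfuR]
    simp only [ContinuousLinearMap.comp_apply, mvCLM_apply]
    rw [show T (0, 1) = (c, d) from rfl, clm_apply_pq (fderiv ℝ (fun z => M (Phi z)) y) c d]
    rfl
  have hsum : dot3 (pd1 (fun z => R.mulVec (M (Rᵀ.mulVec (Phi z)))) x)
        (pd1 (fun z => R.mulVec (M (Rᵀ.mulVec (Phi z)))) x)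
      + dot3 (pd2 (fun z => R.mulVec (M (Rᵀ.mulVec (Phi z)))) x)
          (pd2 (fun z => R.mulVec (M (Rᵀ.mulVec (Phi z)))) x)
      = (a * a + b * b) * (dot3 (pd1 (fun z => M (Phi z)) y) (pd1 (fun z => M (Phi z)) y)
        + dot3 (pd2 (fun z => M (Phi z)) y) (pd2 (fun z => M (Phi z)) y)) := by
    rw [hpd1, hpd2, dot3_mulVec_orth hR, dot3_mulVec_orth hR, dot3_bilin, dot3_bilin,
      dot3_comm (pd2 (fun z => M (Phi z)) y) (pd1 (fun z => M (Phi z)) y), hcs, hds]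
    linear_combination (b * b * dot3 (pd1 (fun z => M (Phi z)) y) (pd1 (fun z => M (Phi z)) y)
      + a * a * dot3 (pd2 (fun z => M (Phi z)) y) (pd2 (fun z => M (Phi z)) y)
      - 2 * a * b * dot3 (pd1 (fun z => M (Phi z)) y) (pd2 (fun z => M (Phi z)) y)) * hs2
  have hpot : dot3 (R.mulVec (M (Rᵀ.mulVec (Phi x)))) (Phi x) = dot3 (M (Phi y)) (Phi y) := by
    rw [show (Rᵀ.mulVec (Phi x)) = Phi y from (Phi_psiR hR hx).symm, dot3_mulVec_transpose,
      show (Rᵀ.mulVec (Phi x)) = Phi y from (Phi_psiR hR hx).symm]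
  rw [hsum, hpot, habs, smul_eq_mul, ← ha]
  ring

end FrameIndiff

open Matrix in
/-- **Frame indifference of the energy.**
A smooth map `m : S² → S²` is represented by its 0-homogeneous extension
`M(z) = m(z/|z|)`, smooth away from the origin and mapping the sphere to itself.
For `R ∈ SO(3)` and the jointly rotated field `m_R(y) = R m(R⁻¹ y)` (with `R⁻¹ = Rᵀ`)
one has `E(m_R∘Φ) = E(m∘Φ)`. -/
theorem frame_indifference_energy
    (κ : ℝ) (hκ : 0 < κ)
    (M : (Fin 3 → ℝ) → Fin 3 → ℝ)
    (hMsm : ContDiffOn ℝ (⊤ : ℕ∞) M {z | z ≠ 0})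
    (hMhom : ∀ z : Fin 3 → ℝ, z ≠ 0 → M z = M ((Real.sqrt (dot3 z z))⁻¹ • z))
    (hMsph : ∀ y : Fin 3 → ℝ, dot3 y y = 1 → dot3 (M y) (M y) = 1)
    (R : Matrix (Fin 3) (Fin 3) ℝ) (hR : Rᵀ * R = 1) (hRdet : R.det = 1) :
    energy κ (fun x => R.mulVec (M (Rᵀ.mulVec (Phi x)))) = energy κ (fun x => M (Phi x)) := by

  classical
  have hRR : R * Rᵀ = 1 := mul_eq_one_comm.mp hR
  have hRT : (Rᵀ)ᵀ * Rᵀ = 1 := by rw [Matrix.transpose_transpose]; exact hRR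
  have hM : ∀ z : Fin 3 → ℝ, z ≠ 0 → DifferentiableAt ℝ M z := by
    intro z hz
    have hop : IsOpen {w : Fin 3 → ℝ | w ≠ 0} := isOpen_ne
    exact (hMsm.contDiffAt (hop.mem_nhds hz)).differentiableAt (by simp)
  unfold energy
  congr 1
  have hUmeas : MeasurableSet (FrameIndiff.UR R) := FrameIndiff.UR_open.measurableSet
  have hfd' : ∀ x ∈ FrameIndiff.UR R,
      HasFDerivWithinAt (FrameIndiff.psiR R) (fderiv ℝ (FrameIndiff.psiR R) x)
        (FrameIndiff.UR R) x :=
    fun x hx => ((FrameIndiff.psiR_diff hx).hasFDerivAt).hasFDerivWithinAt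
  have hcov := MeasureTheory.integral_image_eq_integral_abs_det_fderiv_smul
    MeasureTheory.volume hUmeas hfd' (FrameIndiff.psiR_inj hR)
    (fun y : ℝ × ℝ =>
      dot3 (pd1 (fun w => M (Phi w)) y) (pd1 (fun w => M (Phi w)) y)
        + dot3 (pd2 (fun w => M (Phi w)) y) (pd2 (fun w => M (Phi w)) y)
        + κ * (1 - dot3 (M (Phi y)) (Phi y) ^ 2) * lam y ^ 2)
  calc
    ∫ x : ℝ × ℝ,
        (dot3 (pd1 (fun z => R.mulVec (M (Rᵀ.mulVec (Phi z)))) x)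
            (pd1 (fun z => R.mulVec (M (Rᵀ.mulVec (Phi z)))) x)
          + dot3 (pd2 (fun z => R.mulVec (M (Rᵀ.mulVec (Phi z)))) x)
              (pd2 (fun z => R.mulVec (M (Rᵀ.mulVec (Phi z)))) x)
          + κ * (1 - dot3 (R.mulVec (M (Rᵀ.mulVec (Phi x)))) (Phi x) ^ 2) * lam x ^ 2)
      = ∫ x in FrameIndiff.UR R,
        (dot3 (pd1 (fun z => R.mulVec (M (Rᵀ.mulVec (Phi z)))) x)
            (pd1 (fun z => R.mulVec (M (Rᵀ.mulVec (Phi z)))) x)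
          + dot3 (pd2 (fun z => R.mulVec (M (Rᵀ.mulVec (Phi z)))) x)
              (pd2 (fun z => R.mulVec (M (Rᵀ.mulVec (Phi z)))) x)
          + κ * (1 - dot3 (R.mulVec (M (Rᵀ.mulVec (Phi x)))) (Phi x) ^ 2) * lam x ^ 2) := by
        rw [MeasureTheory.Measure.restrict_eq_self_of_ae_mem (FrameIndiff.ae_mem_UR hR)]
    _ = ∫ x in FrameIndiff.UR R,
        |(fderiv ℝ (FrameIndiff.psiR R) x).det| •
          (dot3 (pd1 (fun w => M (Phi w)) (FrameIndiff.psiR R x))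
              (pd1 (fun w => M (Phi w)) (FrameIndiff.psiR R x))
            + dot3 (pd2 (fun w => M (Phi w)) (FrameIndiff.psiR R x))
                (pd2 (fun w => M (Phi w)) (FrameIndiff.psiR R x))
            + κ * (1 - dot3 (M (Phi (FrameIndiff.psiR R x))) (Phi (FrameIndiff.psiR R x)) ^ 2)
              * lam (FrameIndiff.psiR R x) ^ 2) := by
        refine MeasureTheory.setIntegral_congr_fun hUmeas ?_
        intro x hx
        exact FrameIndiff.key_pointwise hR M hM κ hx
    _ = ∫ y in FrameIndiff.psiR R '' FrameIndiff.UR R,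
        (dot3 (pd1 (fun w => M (Phi w)) y) (pd1 (fun w => M (Phi w)) y)
          + dot3 (pd2 (fun w => M (Phi w)) y) (pd2 (fun w => M (Phi w)) y)
          + κ * (1 - dot3 (M (Phi y)) (Phi y) ^ 2) * lam y ^ 2) := hcov.symm
    _ = ∫ y in FrameIndiff.UR Rᵀ,
        (dot3 (pd1 (fun w => M (Phi w)) y) (pd1 (fun w => M (Phi w)) y)
          + dot3 (pd2 (fun w => M (Phi w)) y) (pd2 (fun w => M (Phi w)) y)
          + κ * (1 - dot3 (M (Phi y)) (Phi y) ^ 2) * lam y ^ 2) := by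
        rw [FrameIndiff.psiR_img hR]
    _ = ∫ y : ℝ × ℝ,
        (dot3 (pd1 (fun w => M (Phi w)) y) (pd1 (fun w => M (Phi w)) y)
          + dot3 (pd2 (fun w => M (Phi w)) y) (pd2 (fun w => M (Phi w)) y)
          + κ * (1 - dot3 (M (Phi y)) (Phi y) ^ 2) * lam y ^ 2) := by
        rw [MeasureTheory.Measure.restrict_eq_self_of_ae_mem (FrameIndiff.ae_mem_UR hRT)]
end
end

section
/- Let κ > 0, R > 0, and let u : ℝ×ℝ² → S² be a smooth solution of the Landau–Lifshitz equation in stereographic coordinates, ∂_t u = u × ( λ(x)⁻² Δu + κ (u·Φ) Φ ), such that u(t,x) = Φ(x) whenever |x| ≥ R. Then for every t: (d/dt) S₃(u(t,·)) = κ ∫_{ℝ²} λ(x)² (u·Φ) (u×Φ)₃ dx, where (u×Φ)₃ is the third component of the cross product. -/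
open MeasureTheory Filter

noncomputable section

section SpinAux

-- ### basic positivity
lemma q_pos (x : ℝ × ℝ) : (0:ℝ) < 1 + x.1 ^ 2 + x.2 ^ 2 := by positivity

lemma lam_pos (x : ℝ × ℝ) : 0 < lam x := by
  unfold lam; positivity

lemma contDiff_lam : ContDiff ℝ (⊤ : ℕ∞) lam := by
  apply ContDiff.div contDiff_const
  · fun_prop
  · intro x; exact ne_of_gt (q_pos x)

lemma contDiff_Phi : ContDiff ℝ (⊤ : ℕ∞) Phi := by
  apply contDiff_pi.mpr
  intro i
  fin_cases i <;> simp [Phi] <;>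
    first
      | exact contDiff_lam.mul contDiff_fst
      | exact contDiff_lam.mul contDiff_snd
      | exact contDiff_lam.mul (ContDiff.div_const (by fun_prop) 2)

-- slice lemmas
lemma fderiv_e1 (f : ℝ × ℝ → ℝ) {x : ℝ × ℝ} (hf : DifferentiableAt ℝ f x) :
    fderiv ℝ f x (1, 0) = deriv (fun s => f (s, x.2)) x.1 := by
  have hline : HasDerivAt (fun s : ℝ => (s, x.2)) ((1:ℝ), (0:ℝ)) x.1 :=
    (hasDerivAt_id x.1).prodMk (hasDerivAt_const _ _)
  have h : HasDerivAt (fun s => f (s, x.2)) (fderiv ℝ f x (1, 0)) x.1 := by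
    have h0 : HasDerivAt (fun s : ℝ => (s, x.2)) ((1:ℝ), (0:ℝ)) x.1 := hline
    have := HasFDerivAt.comp_hasDerivAt (l := f) (l' := fderiv ℝ f x) x.1
      (by simpa using hf.hasFDerivAt) h0
    simpa [Function.comp_def] using this
  exact h.deriv.symm

lemma fderiv_e2 (f : ℝ × ℝ → ℝ) {x : ℝ × ℝ} (hf : DifferentiableAt ℝ f x) :
    fderiv ℝ f x (0, 1) = deriv (fun s => f (x.1, s)) x.2 := by
  have hline : HasDerivAt (fun s : ℝ => (x.1, s)) ((0:ℝ), (1:ℝ)) x.2 :=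
    (hasDerivAt_const _ _).prodMk (hasDerivAt_id x.2)
  have h : HasDerivAt (fun s => f (x.1, s)) (fderiv ℝ f x (0, 1)) x.2 := by
    have h0 : HasDerivAt (fun s : ℝ => (x.1, s)) ((0:ℝ), (1:ℝ)) x.2 := hline
    have := HasFDerivAt.comp_hasDerivAt (l := f) (l' := fderiv ℝ f x) x.2
      (by simpa using hf.hasFDerivAt) h0
    simpa [Function.comp_def] using this
  exact h.deriv.symm

lemma fderiv_lam_e1 (x : ℝ × ℝ) : fderiv ℝ lam x (1, 0) = -(lam x) ^ 2 * x.1 := by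
  rw [fderiv_e1 lam (contDiff_lam.differentiable (by simp) x)]
  have hq : HasDerivAt (fun s : ℝ => 1 + s ^ 2 + x.2 ^ 2) (2 * x.1) x.1 := by
    simpa using (((hasDerivAt_pow 2 x.1).const_add 1).add_const (x.2 ^ 2))
  have h := (hasDerivAt_const x.1 (2:ℝ)).fun_div hq (ne_of_gt (q_pos x))
  have : deriv (fun s => lam (s, x.2)) x.1 =
      (0 * (1 + x.1 ^ 2 + x.2 ^ 2) - 2 * (2 * x.1)) / (1 + x.1 ^ 2 + x.2 ^ 2) ^ 2 := by
    apply HasDerivAt.deriv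
    simpa [lam] using h
  rw [this, lam]
  have := ne_of_gt (q_pos x)
  field_simp
  ring

lemma fderiv_lam_e2 (x : ℝ × ℝ) : fderiv ℝ lam x (0, 1) = -(lam x) ^ 2 * x.2 := by
  rw [fderiv_e2 lam (contDiff_lam.differentiable (by simp) x)]
  have hq : HasDerivAt (fun s : ℝ => 1 + x.1 ^ 2 + s ^ 2) (2 * x.2) x.2 := by
    simpa using (((hasDerivAt_pow 2 x.2).const_add (1 + x.1 ^ 2)))
  have h := (hasDerivAt_const x.2 (2:ℝ)).div hq (ne_of_gt (by have := q_pos x; linarith [q_pos x]))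
  have : deriv (fun s => lam (x.1, s)) x.2 =
      (0 * (1 + x.1 ^ 2 + x.2 ^ 2) - 2 * (2 * x.2)) / (1 + x.1 ^ 2 + x.2 ^ 2) ^ 2 := by
    apply HasDerivAt.deriv
    have h2 : HasDerivAt (fun s : ℝ => 2 / (1 + x.1 ^ 2 + s ^ 2))
        ((0 * (1 + x.1 ^ 2 + x.2 ^ 2) - 2 * (2 * x.2)) / (1 + x.1 ^ 2 + x.2 ^ 2) ^ 2) x.2 := by
      have := (hasDerivAt_const x.2 (2:ℝ)).fun_div hq (ne_of_gt (q_pos x))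
      simpa using this
    simpa [lam] using h2
  rw [this, lam]
  have := ne_of_gt (q_pos x)
  field_simp
  ring

-- component/projection lemma
lemma fderiv_apply_comm (v : ℝ × ℝ → Fin 3 → ℝ) {x : ℝ × ℝ}
    (hv : DifferentiableAt ℝ v x) (w : ℝ × ℝ) (i : Fin 3) :
    fderiv ℝ (fun y => v y i) x w = fderiv ℝ v x w i := by
  have h := ((ContinuousLinearMap.proj (R := ℝ) (φ := fun _ : Fin 3 => ℝ) i).hasFDerivAt.comp
    x hv.hasFDerivAt).fderiv
  have : fderiv ℝ (fun y => v y i) x =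
      (ContinuousLinearMap.proj (R := ℝ) (φ := fun _ : Fin 3 => ℝ) i).comp (fderiv ℝ v x) := h
  rw [this]; rfl

lemma fderiv_mul_apply {f g : ℝ × ℝ → ℝ} {x : ℝ × ℝ} (hf : DifferentiableAt ℝ f x)
    (hg : DifferentiableAt ℝ g x) (w : ℝ × ℝ) :
    fderiv ℝ (fun y => f y * g y) x w = f x * fderiv ℝ g x w + g x * fderiv ℝ f x w := by
  rw [fderiv_fun_mul hf hg]; simp

-- Phi components as functions
lemma Phi_apply0 (x : ℝ × ℝ) : Phi x 0 = lam x * x.1 := by simp [Phi]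
lemma Phi_apply1 (x : ℝ × ℝ) : Phi x 1 = lam x * x.2 := by simp [Phi]

lemma diff_lam (x : ℝ × ℝ) : DifferentiableAt ℝ lam x :=
  (contDiff_lam.differentiable (by simp)) x

lemma fderiv_Phi0_e1 (x : ℝ × ℝ) :
    fderiv ℝ (fun y => Phi y 0) x (1, 0) = lam x + -(lam x) ^ 2 * x.1 * x.1 := by
  have : (fun y : ℝ × ℝ => Phi y 0) = fun y => lam y * y.1 := funext fun y => Phi_apply0 y
  rw [this, fderiv_mul_apply (diff_lam x) differentiableAt_fst, fderiv_lam_e1]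
  simp [fderiv_fst]; ring

lemma fderiv_Phi1_e1 (x : ℝ × ℝ) :
    fderiv ℝ (fun y => Phi y 1) x (1, 0) = -(lam x) ^ 2 * x.1 * x.2 := by
  have : (fun y : ℝ × ℝ => Phi y 1) = fun y => lam y * y.2 := funext fun y => Phi_apply1 y
  rw [this, fderiv_mul_apply (diff_lam x) differentiableAt_snd, fderiv_lam_e1]
  simp [fderiv_snd]; ring

lemma fderiv_Phi0_e2 (x : ℝ × ℝ) :
    fderiv ℝ (fun y => Phi y 0) x (0, 1) = -(lam x) ^ 2 * x.2 * x.1 := by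
  have : (fun y : ℝ × ℝ => Phi y 0) = fun y => lam y * y.1 := funext fun y => Phi_apply0 y
  rw [this, fderiv_mul_apply (diff_lam x) differentiableAt_fst, fderiv_lam_e2]
  simp [fderiv_fst]; ring

lemma fderiv_Phi1_e2 (x : ℝ × ℝ) :
    fderiv ℝ (fun y => Phi y 1) x (0, 1) = lam x + -(lam x) ^ 2 * x.2 * x.2 := by
  have : (fun y : ℝ × ℝ => Phi y 1) = fun y => lam y * y.2 := funext fun y => Phi_apply1 y
  rw [this, fderiv_mul_apply (diff_lam x) differentiableAt_snd, fderiv_lam_e2]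
  simp [fderiv_snd]; ring

lemma diff_Phi (x : ℝ × ℝ) : DifferentiableAt ℝ Phi x :=
  (contDiff_Phi.differentiable (by simp)) x

lemma cross3_apply2 (a b : Fin 3 → ℝ) : cross3 a b 2 = a 0 * b 1 - a 1 * b 0 := by
  simp [cross3]

lemma cross_Phi_pd1 (x : ℝ × ℝ) : cross3 (Phi x) (pd1 Phi x) 2 = -(lam x ^ 2 * x.2) := by
  rw [cross3_apply2, pd1, ← fderiv_apply_comm Phi (diff_Phi x) _ 0,
    ← fderiv_apply_comm Phi (diff_Phi x) _ 1, fderiv_Phi0_e1, fderiv_Phi1_e1,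
    Phi_apply0, Phi_apply1]
  ring

lemma cross_Phi_pd2 (x : ℝ × ℝ) : cross3 (Phi x) (pd2 Phi x) 2 = lam x ^ 2 * x.1 := by
  rw [cross3_apply2, pd2, ← fderiv_apply_comm Phi (diff_Phi x) _ 0,
    ← fderiv_apply_comm Phi (diff_Phi x) _ 1, fderiv_Phi0_e2, fderiv_Phi1_e2,
    Phi_apply0, Phi_apply1]
  ring

-- smoothness of pd1 / pd2
lemma contDiff_pd1 {v : ℝ × ℝ → Fin 3 → ℝ} (hv : ContDiff ℝ (⊤ : ℕ∞) v) : ContDiff ℝ (⊤ : ℕ∞) (pd1 v) := by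
  have h := hv.fderiv_right (m := (⊤ : ℕ∞)) (by simp)
  exact h.clm_apply contDiff_const

lemma contDiff_pd2 {v : ℝ × ℝ → Fin 3 → ℝ} (hv : ContDiff ℝ (⊤ : ℕ∞) v) : ContDiff ℝ (⊤ : ℕ∞) (pd2 v) := by
  have h := hv.fderiv_right (m := (⊤ : ℕ∞)) (by simp)
  exact h.clm_apply contDiff_const

-- the exterior open set and its closure
lemma mem_closure_exterior {R : ℝ} (hR : 0 < R) {x : ℝ × ℝ} (hx : R ^ 2 ≤ x.1 ^ 2 + x.2 ^ 2) :
    x ∈ closure {y : ℝ × ℝ | R ^ 2 < y.1 ^ 2 + y.2 ^ 2} := by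
  rcases lt_or_eq_of_le hx with h | h
  · exact subset_closure h
  · -- |x|² = R², approach with (1+1/(n+1)) • x
    have hxne : x.1 ^ 2 + x.2 ^ 2 ≠ 0 := by rw [← h]; positivity
    have htend : Tendsto (fun n : ℕ => ((1 : ℝ) + 1 / (n + 1)) • x) atTop (nhds x) := by
      have h1 : Tendsto (fun n : ℕ => (1 : ℝ) + 1 / (n + 1)) atTop (nhds 1) := by
        have := tendsto_one_div_add_atTop_nhds_zero_nat (𝕜 := ℝ)
        simpa using (tendsto_const_nhds (x := (1:ℝ))).add this
      have := h1.smul (tendsto_const_nhds (x := x))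
      simpa using this
    apply mem_closure_of_tendsto htend
    filter_upwards [] with n
    show R ^ 2 < (((1 : ℝ) + 1 / (n + 1)) • x).1 ^ 2 + (((1 : ℝ) + 1 / (n + 1)) • x).2 ^ 2
    have hc : (1 : ℝ) < 1 + 1 / (n + 1) := by
      have : (0:ℝ) < 1 / (n + 1) := by positivity
      linarith
    have hpos : 0 < x.1 ^ 2 + x.2 ^ 2 := lt_of_le_of_ne (by positivity) (Ne.symm hxne)
    have : (((1 : ℝ) + 1 / (n + 1)) • x).1 ^ 2 + (((1 : ℝ) + 1 / (n + 1)) • x).2 ^ 2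
        = (1 + 1 / (n + 1)) ^ 2 * (x.1 ^ 2 + x.2 ^ 2) := by
      simp [Prod.smul_fst, Prod.smul_snd, smul_eq_mul]; ring
    rw [this, ← h]
    have hR2 : 0 < R ^ 2 := by positivity
    have hsq : (1:ℝ) < (1 + 1 / ((n:ℝ) + 1)) ^ 2 := by nlinarith
    nlinarith

/-- If a smooth function vanishes on `{R² ≤ |x|²}` then so does its `fderiv`. -/
lemma fderiv_eq_zero_exterior {E : Type*} [NormedAddCommGroup E] [NormedSpace ℝ E]
    {h : ℝ × ℝ → E} (hsm : ContDiff ℝ (⊤ : ℕ∞) h) {R : ℝ} (hR : 0 < R)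
    (h0 : ∀ x : ℝ × ℝ, R ^ 2 ≤ x.1 ^ 2 + x.2 ^ 2 → h x = 0)
    {x : ℝ × ℝ} (hx : R ^ 2 ≤ x.1 ^ 2 + x.2 ^ 2) : fderiv ℝ h x = 0 := by
  set U : Set (ℝ × ℝ) := {y | R ^ 2 < y.1 ^ 2 + y.2 ^ 2} with hU
  have hUopen : IsOpen U := isOpen_lt continuous_const (by fun_prop)
  have heq : Set.EqOn (fderiv ℝ h) (fun _ => 0) U := by
    intro y hy
    have hev : h =ᶠ[nhds y] fun _ => 0 := by
      filter_upwards [hUopen.mem_nhds hy] with z hz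
      exact h0 z (le_of_lt hz)
    rw [hev.fderiv_eq]
    exact fderiv_const_apply 0
  have hcont : Continuous (fderiv ℝ h) := (hsm.fderiv_right (m := (⊤ : ℕ∞)) (by simp)).continuous
  have := heq.closure hcont continuous_const
  exact this (mem_closure_exterior hR hx)

/-- If two smooth maps agree on `{R² ≤ |x|²}` then so do their partials. -/
lemma pd_eq_exterior {v w : ℝ × ℝ → Fin 3 → ℝ} (hv : ContDiff ℝ (⊤ : ℕ∞) v) (hw : ContDiff ℝ (⊤ : ℕ∞) w)
    {R : ℝ} (hR : 0 < R) (hvw : ∀ x : ℝ × ℝ, R ^ 2 ≤ x.1 ^ 2 + x.2 ^ 2 → v x = w x)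
    {x : ℝ × ℝ} (hx : R ^ 2 ≤ x.1 ^ 2 + x.2 ^ 2) :
    pd1 v x = pd1 w x ∧ pd2 v x = pd2 w x := by
  have hdiff : ContDiff ℝ (⊤ : ℕ∞) (fun y => v y - w y) := hv.sub hw
  have h0 : ∀ y : ℝ × ℝ, R ^ 2 ≤ y.1 ^ 2 + y.2 ^ 2 → v y - w y = 0 := fun y hy => by
    rw [hvw y hy]; simp
  have hfd := fderiv_eq_zero_exterior hdiff hR h0 hx
  have hsub : fderiv ℝ (fun y => v y - w y) x = fderiv ℝ v x - fderiv ℝ w x :=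
    fderiv_fun_sub ((hv.differentiable (by simp)) x) ((hw.differentiable (by simp)) x)
  have : fderiv ℝ v x = fderiv ℝ w x := by
    have := hsub.symm.trans hfd
    exact sub_eq_zero.mp this
  constructor <;> simp [pd1, pd2, this]

-- compactness of the disc
lemma disc_subset_ball {R : ℝ} (hR : 0 ≤ R) :
    {y : ℝ × ℝ | y.1 ^ 2 + y.2 ^ 2 ≤ R ^ 2} ⊆ Metric.closedBall 0 R := by
  intro y hy
  simp only [Set.mem_setOf_eq] at hy
  simp only [Metric.mem_closedBall, dist_zero_right, Prod.norm_def, Real.norm_eq_abs]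
  have h1 : |y.1| ≤ R := by
    rw [abs_le]; constructor <;> nlinarith [sq_nonneg y.2, sq_nonneg (y.1 + R), sq_nonneg (y.1 - R)]
  have h2 : |y.2| ≤ R := by
    rw [abs_le]; constructor <;> nlinarith [sq_nonneg y.1, sq_nonneg (y.2 + R), sq_nonneg (y.2 - R)]
  exact max_le h1 h2

lemma isCompact_disc {R : ℝ} (hR : 0 ≤ R) : IsCompact {y : ℝ × ℝ | y.1 ^ 2 + y.2 ^ 2 ≤ R ^ 2} := by
  apply (isCompact_closedBall (0 : ℝ × ℝ) R).of_isClosed_subset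
  · exact isClosed_le (by fun_prop) continuous_const
  · exact disc_subset_ball hR

/-- A continuous function vanishing outside the disc of radius R has compact support. -/
lemma hasCompactSupport_of_vanish {f : ℝ × ℝ → ℝ} {R : ℝ} (hR : 0 ≤ R)
    (h : ∀ x : ℝ × ℝ, R ^ 2 ≤ x.1 ^ 2 + x.2 ^ 2 → f x = 0) : HasCompactSupport f := by
  apply HasCompactSupport.intro (isCompact_disc hR)
  intro x hx
  simp only [Set.mem_setOf_eq, not_le] at hx
  exact h x hx.le

section Divergence

variable {W : ℝ × ℝ → ℝ} {R : ℝ}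

lemma gcont (hW : ContDiff ℝ (⊤ : ℕ∞) W) (v : ℝ × ℝ) :
    Continuous (fun x : ℝ × ℝ => fderiv ℝ W x v) :=
  ((hW.fderiv_right (m := (⊤ : ℕ∞)) (by simp)).clm_apply contDiff_const).continuous

lemma gvanish (hW : ContDiff ℝ (⊤ : ℕ∞) W) (hR : 0 < R)
    (h0 : ∀ x : ℝ × ℝ, R ^ 2 ≤ x.1 ^ 2 + x.2 ^ 2 → W x = 0) (v : ℝ × ℝ) :
    ∀ x : ℝ × ℝ, R ^ 2 ≤ x.1 ^ 2 + x.2 ^ 2 → fderiv ℝ W x v = 0 := by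
  intro x hx
  have h00 : ∀ y : ℝ × ℝ, R ^ 2 ≤ y.1 ^ 2 + y.2 ^ 2 → W y = (0:ℝ) := h0
  rw [fderiv_eq_zero_exterior hW hR h00 hx]
  rfl

lemma gint (hW : ContDiff ℝ (⊤ : ℕ∞) W) (hR : 0 < R)
    (h0 : ∀ x : ℝ × ℝ, R ^ 2 ≤ x.1 ^ 2 + x.2 ^ 2 → W x = 0) (v : ℝ × ℝ) :
    Integrable (fun x : ℝ × ℝ => fderiv ℝ W x v) volume :=
  (gcont hW v).integrable_of_hasCompactSupport
    (hasCompactSupport_of_vanish hR.le (gvanish hW hR h0 v))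

/-- ∫ ∂₁ W = 0 for scalar smooth W vanishing on the exterior of a disc. -/
lemma integral_pd_one_eq_zero (hW : ContDiff ℝ (⊤ : ℕ∞) W) (hR : 0 < R)
    (h0 : ∀ x : ℝ × ℝ, R ^ 2 ≤ x.1 ^ 2 + x.2 ^ 2 → W x = 0) :
    ∫ x : ℝ × ℝ, fderiv ℝ W x (1, 0) = 0 := by
  set g : ℝ × ℝ → ℝ := fun x => fderiv ℝ W x (1, 0) with hg
  have hint : Integrable g volume := gint hW hR h0 _
  have hvan := gvanish hW hR h0 (1, 0)
  have hprod : (volume : Measure (ℝ × ℝ)) = (volume : Measure ℝ).prod volume :=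
    rfl
  have hint' : Integrable g ((volume : Measure ℝ).prod volume) := by rwa [← hprod]
  have key : ∀ b : ℝ, (∫ a : ℝ, g (a, b)) = 0 := by
    intro b
    have hd : ∀ s : ℝ, HasDerivAt (fun a => W (a, b)) (g (s, b)) s := by
      intro s
      have hline : HasDerivAt (fun a : ℝ => (a, b)) ((1:ℝ), (0:ℝ)) s :=
        (hasDerivAt_id s).prodMk (hasDerivAt_const _ _)
      have := HasFDerivAt.comp_hasDerivAt (l := W) (l' := fderiv ℝ W (s, b)) s
        ((hW.differentiable (by simp) (s, b)).hasFDerivAt) hline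
      simpa [Function.comp_def, hg] using this
    have hsupp : Function.support (fun a => g (a, b)) ⊆ Set.Ioc (-(R+1)) (R+1) := by
      intro a ha
      by_contra hmem
      apply ha
      simp only [Set.mem_Ioc, not_and_or, not_lt, not_le] at hmem
      have haR : R ^ 2 ≤ a ^ 2 + b ^ 2 := by
        rcases hmem with h | h
        · nlinarith [sq_nonneg b]
        · nlinarith [sq_nonneg b]
      exact hvan (a, b) haR
    rw [← intervalIntegral.integral_eq_integral_of_support_subset hsupp]
    have hii : IntervalIntegrable (fun a => g (a, b)) volume (-(R+1)) (R+1) :=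
      ((gcont hW (1,0)).comp (continuous_id.prodMk continuous_const)).intervalIntegrable _ _
    rw [intervalIntegral.integral_eq_sub_of_hasDerivAt (fun x _ => hd x) hii]
    rw [h0 (R+1, b) (by show R ^ 2 ≤ (R+1) ^ 2 + b ^ 2; nlinarith [sq_nonneg b]),
      h0 (-(R+1), b) (by show R ^ 2 ≤ (-(R+1)) ^ 2 + b ^ 2; nlinarith [sq_nonneg b])]
    simp
  calc ∫ x : ℝ × ℝ, g x = ∫ x : ℝ × ℝ, g x ∂((volume : Measure ℝ).prod volume) := by rw [← hprod]
    _ = ∫ a : ℝ, ∫ b : ℝ, g (a, b) := integral_prod g hint'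
    _ = ∫ b : ℝ, ∫ a : ℝ, g (a, b) := integral_integral_swap (f := fun a b => g (a, b)) hint'
    _ = 0 := by simp [key]

lemma integral_pd_two_eq_zero (hW : ContDiff ℝ (⊤ : ℕ∞) W) (hR : 0 < R)
    (h0 : ∀ x : ℝ × ℝ, R ^ 2 ≤ x.1 ^ 2 + x.2 ^ 2 → W x = 0) :
    ∫ x : ℝ × ℝ, fderiv ℝ W x (0, 1) = 0 := by
  set g : ℝ × ℝ → ℝ := fun x => fderiv ℝ W x (0, 1) with hg
  have hint : Integrable g volume := gint hW hR h0 _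
  have hvan := gvanish hW hR h0 (0, 1)
  have hprod : (volume : Measure (ℝ × ℝ)) = (volume : Measure ℝ).prod volume :=
    rfl
  have hint' : Integrable g ((volume : Measure ℝ).prod volume) := by rwa [← hprod]
  have key : ∀ a : ℝ, (∫ b : ℝ, g (a, b)) = 0 := by
    intro a
    have hd : ∀ s : ℝ, HasDerivAt (fun b => W (a, b)) (g (a, s)) s := by
      intro s
      have hline : HasDerivAt (fun b : ℝ => (a, b)) ((0:ℝ), (1:ℝ)) s :=
        (hasDerivAt_const _ _).prodMk (hasDerivAt_id s)
      have := HasFDerivAt.comp_hasDerivAt (l := W) (l' := fderiv ℝ W (a, s)) s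
        ((hW.differentiable (by simp) (a, s)).hasFDerivAt) hline
      simpa [Function.comp_def, hg] using this
    have hsupp : Function.support (fun b => g (a, b)) ⊆ Set.Ioc (-(R+1)) (R+1) := by
      intro b hb
      by_contra hmem
      apply hb
      simp only [Set.mem_Ioc, not_and_or, not_lt, not_le] at hmem
      have haR : R ^ 2 ≤ a ^ 2 + b ^ 2 := by
        rcases hmem with h | h
        · nlinarith [sq_nonneg a]
        · nlinarith [sq_nonneg a]
      exact hvan (a, b) haR
    rw [← intervalIntegral.integral_eq_integral_of_support_subset hsupp]
    have hii : IntervalIntegrable (fun b => g (a, b)) volume (-(R+1)) (R+1) :=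
      ((gcont hW (0,1)).comp (continuous_const.prodMk continuous_id)).intervalIntegrable _ _
    rw [intervalIntegral.integral_eq_sub_of_hasDerivAt (fun x _ => hd x) hii]
    rw [h0 (a, R+1) (by show R ^ 2 ≤ a ^ 2 + (R+1) ^ 2; nlinarith [sq_nonneg a]),
      h0 (a, -(R+1)) (by show R ^ 2 ≤ a ^ 2 + (-(R+1)) ^ 2; nlinarith [sq_nonneg a])]
    simp
  calc ∫ x : ℝ × ℝ, g x = ∫ x : ℝ × ℝ, g x ∂((volume : Measure ℝ).prod volume) := by rw [← hprod]
    _ = ∫ a : ℝ, ∫ b : ℝ, g (a, b) := integral_prod g hint'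
    _ = 0 := by simp [key]

end Divergence


section DivIdentity

variable {v : ℝ × ℝ → Fin 3 → ℝ}

lemma diff_comp (hv : ContDiff ℝ (⊤ : ℕ∞) v) (i : Fin 3) (x : ℝ × ℝ) :
    DifferentiableAt ℝ (fun y => v y i) x :=
  ((contDiff_pi.mp hv i).differentiable (by simp)) x

lemma diff_lam_sq (x : ℝ × ℝ) : DifferentiableAt ℝ (fun y => lam y ^ 2) x :=
  ((contDiff_lam.pow 2).differentiable (by simp)) x

lemma fderiv_lam_sq_e1 (x : ℝ × ℝ) :
    fderiv ℝ (fun y => lam y ^ 2) x (1, 0) = 2 * lam x * (-(lam x) ^ 2 * x.1) := by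
  have h : (fun y => lam y ^ 2) = fun y => lam y * lam y := by funext y; ring
  rw [h, fderiv_mul_apply (diff_lam x) (diff_lam x), fderiv_lam_e1]
  ring

lemma fderiv_lam_sq_e2 (x : ℝ × ℝ) :
    fderiv ℝ (fun y => lam y ^ 2) x (0, 1) = 2 * lam x * (-(lam x) ^ 2 * x.2) := by
  have h : (fun y => lam y ^ 2) = fun y => lam y * lam y := by funext y; ring
  rw [h, fderiv_mul_apply (diff_lam x) (diff_lam x), fderiv_lam_e2]
  ring

lemma fderiv_W1_apply (hv : ContDiff ℝ (⊤ : ℕ∞) v) (x : ℝ × ℝ) :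
    fderiv ℝ (fun y => v y 0 * pd1 v y 1 - v y 1 * pd1 v y 0 + lam y ^ 2 * y.2) x (1, 0)
      = v x 0 * pd1 (pd1 v) x 1 - v x 1 * pd1 (pd1 v) x 0
        + 2 * lam x * (-(lam x) ^ 2 * x.1) * x.2 := by
  have hp1 : ContDiff ℝ (⊤ : ℕ∞) (pd1 v) := contDiff_pd1 hv
  have d00 := diff_comp hv 0 x
  have d01 := diff_comp hv 1 x
  have dp0 := diff_comp hp1 0 x
  have dp1 := diff_comp hp1 1 x
  have dm1 : DifferentiableAt ℝ (fun y => v y 0 * pd1 v y 1) x := d00.mul dp1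
  have dm2 : DifferentiableAt ℝ (fun y => v y 1 * pd1 v y 0) x := d01.mul dp0
  have dm3 : DifferentiableAt ℝ (fun y => lam y ^ 2 * y.2) x :=
    (diff_lam_sq x).mul differentiableAt_snd
  rw [fderiv_fun_add (f := fun y => v y 0 * pd1 v y 1 - v y 1 * pd1 v y 0) (dm1.sub dm2) dm3]
  rw [ContinuousLinearMap.add_apply, fderiv_fun_sub dm1 dm2, ContinuousLinearMap.sub_apply]
  rw [fderiv_mul_apply d00 dp1, fderiv_mul_apply d01 dp0,
    fderiv_mul_apply (diff_lam_sq x) differentiableAt_snd, fderiv_lam_sq_e1]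
  rw [fderiv_apply_comm v ((hv.differentiable (by simp)) x) (1,0) 0,
    fderiv_apply_comm v ((hv.differentiable (by simp)) x) (1,0) 1,
    fderiv_apply_comm (pd1 v) ((hp1.differentiable (by simp)) x) (1,0) 0,
    fderiv_apply_comm (pd1 v) ((hp1.differentiable (by simp)) x) (1,0) 1]
  have hsnd : fderiv ℝ (fun y : ℝ × ℝ => y.2) x (1, 0) = 0 := by
    rw [fderiv_snd]; rfl
  rw [hsnd]
  show v x 0 * pd1 (pd1 v) x 1 + pd1 v x 1 * pd1 v x 0
      - (v x 1 * pd1 (pd1 v) x 0 + pd1 v x 0 * pd1 v x 1)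
      + (lam x ^ 2 * 0 + x.2 * (2 * lam x * (-lam x ^ 2 * x.1))) = _
  ring

lemma fderiv_W2_apply (hv : ContDiff ℝ (⊤ : ℕ∞) v) (x : ℝ × ℝ) :
    fderiv ℝ (fun y => v y 0 * pd2 v y 1 - v y 1 * pd2 v y 0 - lam y ^ 2 * y.1) x (0, 1)
      = v x 0 * pd2 (pd2 v) x 1 - v x 1 * pd2 (pd2 v) x 0
        - 2 * lam x * (-(lam x) ^ 2 * x.2) * x.1 := by
  have hp2 : ContDiff ℝ (⊤ : ℕ∞) (pd2 v) := contDiff_pd2 hv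
  have d00 := diff_comp hv 0 x
  have d01 := diff_comp hv 1 x
  have dp0 := diff_comp hp2 0 x
  have dp1 := diff_comp hp2 1 x
  have dm1 : DifferentiableAt ℝ (fun y => v y 0 * pd2 v y 1) x := d00.mul dp1
  have dm2 : DifferentiableAt ℝ (fun y => v y 1 * pd2 v y 0) x := d01.mul dp0
  have dm3 : DifferentiableAt ℝ (fun y => lam y ^ 2 * y.1) x :=
    (diff_lam_sq x).mul differentiableAt_fst
  rw [fderiv_fun_sub (f := fun y => v y 0 * pd2 v y 1 - v y 1 * pd2 v y 0) (dm1.sub dm2) dm3]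
  rw [ContinuousLinearMap.sub_apply, fderiv_fun_sub dm1 dm2, ContinuousLinearMap.sub_apply]
  rw [fderiv_mul_apply d00 dp1, fderiv_mul_apply d01 dp0,
    fderiv_mul_apply (diff_lam_sq x) differentiableAt_fst, fderiv_lam_sq_e2]
  rw [fderiv_apply_comm v ((hv.differentiable (by simp)) x) (0,1) 0,
    fderiv_apply_comm v ((hv.differentiable (by simp)) x) (0,1) 1,
    fderiv_apply_comm (pd2 v) ((hp2.differentiable (by simp)) x) (0,1) 0,
    fderiv_apply_comm (pd2 v) ((hp2.differentiable (by simp)) x) (0,1) 1]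
  have hfst : fderiv ℝ (fun y : ℝ × ℝ => y.1) x (0, 1) = 0 := by
    rw [fderiv_fst]; rfl
  rw [hfst]
  show v x 0 * pd2 (pd2 v) x 1 + pd2 v x 1 * pd2 v x 0
      - (v x 1 * pd2 (pd2 v) x 0 + pd2 v x 0 * pd2 v x 1)
      - (lam x ^ 2 * 0 + x.1 * (2 * lam x * (-lam x ^ 2 * x.2))) = _
  ring

/-- The divergence identity:  (v × Δv)₃ = ∂₁W₁ + ∂₂W₂. -/
lemma cross_lap_eq_div (hv : ContDiff ℝ (⊤ : ℕ∞) v) (x : ℝ × ℝ) :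
    cross3 (v x) (lapP v x) 2
      = fderiv ℝ (fun y => v y 0 * pd1 v y 1 - v y 1 * pd1 v y 0 + lam y ^ 2 * y.2) x (1, 0)
        + fderiv ℝ (fun y => v y 0 * pd2 v y 1 - v y 1 * pd2 v y 0 - lam y ^ 2 * y.1) x (0, 1) := by
  rw [fderiv_W1_apply hv, fderiv_W2_apply hv, cross3_apply2]
  have h1 : lapP v x 1 = pd1 (pd1 v) x 1 + pd2 (pd2 v) x 1 := rfl
  have h0 : lapP v x 0 = pd1 (pd1 v) x 0 + pd2 (pd2 v) x 0 := rfl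
  rw [h1, h0]
  ring

/-- Smoothness of the flux fields. -/
lemma contDiff_W1 (hv : ContDiff ℝ (⊤ : ℕ∞) v) :
    ContDiff ℝ (⊤ : ℕ∞) (fun y : ℝ × ℝ => v y 0 * pd1 v y 1 - v y 1 * pd1 v y 0 + lam y ^ 2 * y.2) := by
  have hp1 : ContDiff ℝ (⊤ : ℕ∞) (pd1 v) := contDiff_pd1 hv
  exact (((contDiff_pi.mp hv 0).mul (contDiff_pi.mp hp1 1)).sub
    ((contDiff_pi.mp hv 1).mul (contDiff_pi.mp hp1 0))).add ((contDiff_lam.pow 2).mul contDiff_snd)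

lemma contDiff_W2 (hv : ContDiff ℝ (⊤ : ℕ∞) v) :
    ContDiff ℝ (⊤ : ℕ∞) (fun y : ℝ × ℝ => v y 0 * pd2 v y 1 - v y 1 * pd2 v y 0 - lam y ^ 2 * y.1) := by
  have hp2 : ContDiff ℝ (⊤ : ℕ∞) (pd2 v) := contDiff_pd2 hv
  exact (((contDiff_pi.mp hv 0).mul (contDiff_pi.mp hp2 1)).sub
    ((contDiff_pi.mp hv 1).mul (contDiff_pi.mp hp2 0))).sub ((contDiff_lam.pow 2).mul contDiff_fst)

/-- Vanishing of the flux fields outside the disc. -/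
lemma W1_vanish (hv : ContDiff ℝ (⊤ : ℕ∞) v) {R : ℝ} (hR : 0 < R)
    (hloc : ∀ x : ℝ × ℝ, R ^ 2 ≤ x.1 ^ 2 + x.2 ^ 2 → v x = Phi x)
    {x : ℝ × ℝ} (hx : R ^ 2 ≤ x.1 ^ 2 + x.2 ^ 2) :
    v x 0 * pd1 v x 1 - v x 1 * pd1 v x 0 + lam x ^ 2 * x.2 = 0 := by
  have hpd := pd_eq_exterior hv contDiff_Phi hR hloc hx
  have hvx := hloc x hx
  have : v x 0 * pd1 v x 1 - v x 1 * pd1 v x 0 = cross3 (Phi x) (pd1 Phi x) 2 := by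
    rw [cross3_apply2, hvx, hpd.1]
  rw [this, cross_Phi_pd1]
  ring

lemma W2_vanish (hv : ContDiff ℝ (⊤ : ℕ∞) v) {R : ℝ} (hR : 0 < R)
    (hloc : ∀ x : ℝ × ℝ, R ^ 2 ≤ x.1 ^ 2 + x.2 ^ 2 → v x = Phi x)
    {x : ℝ × ℝ} (hx : R ^ 2 ≤ x.1 ^ 2 + x.2 ^ 2) :
    v x 0 * pd2 v x 1 - v x 1 * pd2 v x 0 - lam x ^ 2 * x.1 = 0 := by
  have hpd := pd_eq_exterior hv contDiff_Phi hR hloc hx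
  have hvx := hloc x hx
  have : v x 0 * pd2 v x 1 - v x 1 * pd2 v x 0 = cross3 (Phi x) (pd2 Phi x) 2 := by
    rw [cross3_apply2, hvx, hpd.2]
  rw [this, cross_Phi_pd2]
  ring

/-- The first term integrates to zero, and is integrable. -/
lemma integrable_cross_lap (hv : ContDiff ℝ (⊤ : ℕ∞) v) {R : ℝ} (hR : 0 < R)
    (hloc : ∀ x : ℝ × ℝ, R ^ 2 ≤ x.1 ^ 2 + x.2 ^ 2 → v x = Phi x) :
    Integrable (fun x : ℝ × ℝ => cross3 (v x) (lapP v x) 2) volume := by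
  have hid : (fun x : ℝ × ℝ => cross3 (v x) (lapP v x) 2)
      = fun x =>
        fderiv ℝ (fun y => v y 0 * pd1 v y 1 - v y 1 * pd1 v y 0 + lam y ^ 2 * y.2) x (1, 0)
        + fderiv ℝ (fun y => v y 0 * pd2 v y 1 - v y 1 * pd2 v y 0 - lam y ^ 2 * y.1) x (0, 1) :=
    funext fun x => cross_lap_eq_div hv x
  rw [hid]
  exact (gint (contDiff_W1 hv) hR (fun x hx => W1_vanish hv hR hloc hx) _).add
    (gint (contDiff_W2 hv) hR (fun x hx => W2_vanish hv hR hloc hx) _)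

lemma integral_cross_lap (hv : ContDiff ℝ (⊤ : ℕ∞) v) {R : ℝ} (hR : 0 < R)
    (hloc : ∀ x : ℝ × ℝ, R ^ 2 ≤ x.1 ^ 2 + x.2 ^ 2 → v x = Phi x) :
    ∫ x : ℝ × ℝ, cross3 (v x) (lapP v x) 2 = 0 := by
  have hid : (fun x : ℝ × ℝ => cross3 (v x) (lapP v x) 2)
      = fun x =>
        fderiv ℝ (fun y => v y 0 * pd1 v y 1 - v y 1 * pd1 v y 0 + lam y ^ 2 * y.2) x (1, 0)
        + fderiv ℝ (fun y => v y 0 * pd2 v y 1 - v y 1 * pd2 v y 0 - lam y ^ 2 * y.1) x (0, 1) :=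
    funext fun x => cross_lap_eq_div hv x
  rw [hid, integral_add (gint (contDiff_W1 hv) hR (fun x hx => W1_vanish hv hR hloc hx) _)
    (gint (contDiff_W2 hv) hR (fun x hx => W2_vanish hv hR hloc hx) _)]
  rw [integral_pd_one_eq_zero (contDiff_W1 hv) hR (fun x hx => W1_vanish hv hR hloc hx),
    integral_pd_two_eq_zero (contDiff_W2 hv) hR (fun x hx => W2_vanish hv hR hloc hx)]
  simp

end DivIdentity

section IntegrabilityHelpers

lemma norm_sq_le (x : ℝ × ℝ) : ‖x‖ ^ 2 ≤ x.1 ^ 2 + x.2 ^ 2 := by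
  rw [Prod.norm_def]
  rcases max_cases ‖x.1‖ ‖x.2‖ with ⟨h, _⟩ | ⟨h, _⟩ <;> rw [h] <;>
    simp only [Real.norm_eq_abs, sq_abs] <;> nlinarith [sq_nonneg x.1, sq_nonneg x.2]

lemma integrable_lam_sq : Integrable (fun x : ℝ × ℝ => lam x ^ 2) volume := by
  have h4 : Integrable (fun x : ℝ × ℝ => ((1:ℝ) + ‖x‖ ^ 2) ^ (-(4:ℝ) / 2)) volume :=
    integrable_rpow_neg_one_add_norm_sq (by simp; norm_num)
  apply (h4.const_mul 4).mono' ((contDiff_lam.pow 2).continuous.aestronglyMeasurable)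
  filter_upwards [] with x
  have hq := q_pos x
  have hq' : (0:ℝ) < 1 + ‖x‖ ^ 2 := by positivity
  have hle : (1:ℝ) + ‖x‖ ^ 2 ≤ 1 + x.1 ^ 2 + x.2 ^ 2 := by
    have := norm_sq_le x; linarith
  have hrp : ((1:ℝ) + ‖x‖ ^ 2) ^ (-(4:ℝ) / 2) = (((1:ℝ) + ‖x‖ ^ 2) ^ 2)⁻¹ := by
    rw [show (-(4:ℝ) / 2) = -(2:ℝ) by norm_num, Real.rpow_neg hq'.le, Real.rpow_two]
  have h1 : ‖lam x ^ 2‖ = 4 / (1 + x.1 ^ 2 + x.2 ^ 2) ^ 2 := by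
    rw [Real.norm_eq_abs, abs_of_nonneg (by positivity)]
    unfold lam
    rw [div_pow]
    norm_num
  rw [h1, hrp, show (4:ℝ) * (((1:ℝ) + ‖x‖ ^ 2) ^ 2)⁻¹ = 4 / ((1:ℝ) + ‖x‖ ^ 2) ^ 2 from by ring]
  have : (0:ℝ) < ((1:ℝ) + ‖x‖ ^ 2) ^ 2 := by positivity
  have h2 : ((1:ℝ) + ‖x‖ ^ 2) ^ 2 ≤ (1 + x.1 ^ 2 + x.2 ^ 2) ^ 2 := by nlinarith [hq', hle]
  exact div_le_div_of_nonneg_left (by norm_num) this h2 |>.trans_eq rfl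

lemma sphere_comp_le {w : Fin 3 → ℝ} (hw : dot3 w w = 1) (i : Fin 3) : |w i| ≤ 1 := by
  unfold dot3 at hw
  fin_cases i
  · show |w 0| ≤ 1
    rw [abs_le]; constructor <;> nlinarith [sq_nonneg (w 0), sq_nonneg (w 1), sq_nonneg (w 2),
      sq_nonneg (w 0 + 1), sq_nonneg (w 0 - 1)]
  · show |w 1| ≤ 1
    rw [abs_le]; constructor <;> nlinarith [sq_nonneg (w 0), sq_nonneg (w 1), sq_nonneg (w 2),
      sq_nonneg (w 1 + 1), sq_nonneg (w 1 - 1)]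
  · show |w 2| ≤ 1
    rw [abs_le]; constructor <;> nlinarith [sq_nonneg (w 0), sq_nonneg (w 1), sq_nonneg (w 2),
      sq_nonneg (w 2 + 1), sq_nonneg (w 2 - 1)]

lemma sphere_norm_le {w : Fin 3 → ℝ} (hw : dot3 w w = 1) : ‖w‖ ≤ 1 := by
  apply pi_norm_le_iff_of_nonneg zero_le_one |>.mpr
  intro i
  rw [Real.norm_eq_abs]
  exact sphere_comp_le hw i

lemma cross3_self (a : Fin 3 → ℝ) (i : Fin 3) : cross3 a a i = 0 := by
  fin_cases i <;> simp [cross3] <;> ring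

end IntegrabilityHelpers

end SpinAux

set_option maxHeartbeats 2000000 in
/-- **Time derivative of the spin angular momentum `S₃`.**
For a smooth, localized solution of the Landau–Lifshitz equation,
`(d/dt) S₃(u(t,·)) = κ ∫ λ(x)² (u·Φ)(u×Φ)₃ dx`. -/
theorem spin_momentum_evolution
    (κ R : ℝ) (hκ : 0 < κ) (hR : 0 < R)
    (u : ℝ → ℝ × ℝ → Fin 3 → ℝ)
    (hsm : ContDiff ℝ (⊤ : ℕ∞) (fun p : ℝ × (ℝ × ℝ) => u p.1 p.2))
    (hsph : ∀ t, SphereValued (u t))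
    (hLL : IsLLSolution κ u)
    (hloc : ∀ (t : ℝ) (x : ℝ × ℝ), R ^ 2 ≤ x.1 ^ 2 + x.2 ^ 2 → u t x = Phi x) :
    ∀ t : ℝ,
      HasDerivAt (fun s => Sspin (u s) 2)
        (κ * ∫ x : ℝ × ℝ, lam x ^ 2 * (dot3 (u t x) (Phi x) * cross3 (u t x) (Phi x) 2)) t := by
  intro t
  -- smoothness of slices
  have hvsm : ∀ s, ContDiff ℝ (⊤ : ℕ∞) (u s) := fun s =>
    hsm.comp ((contDiff_const (c := s)).prodMk contDiff_id)
  have hslice : ∀ x : ℝ × ℝ, ContDiff ℝ (⊤ : ℕ∞) (fun s => u s x) := fun x =>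
    hsm.comp (contDiff_id.prodMk contDiff_const)
  -- Step A: project the spin integral
  have hintS : ∀ s : ℝ, Integrable (fun x : ℝ × ℝ => lam x ^ 2 • u s x) volume := by
    intro s
    apply integrable_lam_sq.mono'
    · apply Continuous.aestronglyMeasurable
      exact ((contDiff_lam.pow 2).continuous).smul (hvsm s).continuous
    · filter_upwards [] with x
      rw [norm_smul]
      have h1 : ‖u s x‖ ≤ 1 := sphere_norm_le (hsph s x)
      have h2 : ‖lam x ^ 2‖ = lam x ^ 2 := by
        rw [Real.norm_eq_abs, abs_of_nonneg (by positivity)]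
      calc ‖lam x ^ 2‖ * ‖u s x‖ ≤ ‖lam x ^ 2‖ * 1 := by
            apply mul_le_mul_of_nonneg_left h1 (norm_nonneg _)
        _ = lam x ^ 2 := by rw [mul_one, h2]
  have hS : ∀ s : ℝ, Sspin (u s) 2 = ∫ x : ℝ × ℝ, lam x ^ 2 * u s x 2 := by
    intro s
    have := (ContinuousLinearMap.proj (R := ℝ) (φ := fun _ : Fin 3 => ℝ) 2).integral_comp_comm
      (hintS s)
    unfold Sspin
    simpa [smul_eq_mul] using this.symm
  -- Step B: differentiate under the integral sign
  set F : ℝ → ℝ × ℝ → ℝ := fun s x => lam x ^ 2 * u s x 2 with hF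
  set F' : ℝ → ℝ × ℝ → ℝ := fun s x => lam x ^ 2 * deriv (fun r => u r x 2) s with hF'
  have hD : ∀ (s : ℝ) (x : ℝ × ℝ), HasDerivAt (fun r => u r x 2) (deriv (fun r => u r x 2) s) s :=
    fun s x => (((contDiff_pi.mp (hslice x) 2).differentiable (by simp)) s).hasDerivAt
  have hF'0 : ∀ (s : ℝ) (x : ℝ × ℝ), R ^ 2 ≤ x.1 ^ 2 + x.2 ^ 2 → F' s x = 0 := by
    intro s x hx
    have hconst : (fun r : ℝ => u r x 2) = fun _ => Phi x 2 :=
      funext fun r => by rw [hloc r x hx]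
    simp [hF', hconst]
  -- continuity of (s,x) ↦ F' s x
  have hUsm : ContDiff ℝ (⊤ : ℕ∞) (fun p : ℝ × (ℝ × ℝ) => u p.1 p.2 2) := contDiff_pi.mp hsm 2
  have hderiv_eq : ∀ (s : ℝ) (x : ℝ × ℝ), deriv (fun r => u r x 2) s
      = fderiv ℝ (fun p : ℝ × (ℝ × ℝ) => u p.1 p.2 2) (s, x) ((1 : ℝ), (0 : ℝ × ℝ)) := by
    intro s x
    have hline : HasDerivAt (fun r : ℝ => (r, x)) ((1 : ℝ), (0 : ℝ × ℝ)) s :=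
      (hasDerivAt_id s).prodMk (hasDerivAt_const _ _)
    have h := HasFDerivAt.comp_hasDerivAt (l := fun p : ℝ × (ℝ × ℝ) => u p.1 p.2 2)
      (l' := fderiv ℝ (fun p : ℝ × (ℝ × ℝ) => u p.1 p.2 2) (s, x)) s
      (((hUsm.differentiable (by simp)) (s, x)).hasFDerivAt) hline
    have h2 : HasDerivAt (fun r : ℝ => u r x 2)
        (fderiv ℝ (fun p : ℝ × (ℝ × ℝ) => u p.1 p.2 2) (s, x) ((1 : ℝ), (0 : ℝ × ℝ))) s := by
      simpa [Function.comp_def] using h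
    exact h2.deriv
  have hGcont : Continuous (fun p : ℝ × (ℝ × ℝ) => F' p.1 p.2) := by
    have h1 : Continuous fun p : ℝ × (ℝ × ℝ) =>
        fderiv ℝ (fun q : ℝ × (ℝ × ℝ) => u q.1 q.2 2) p ((1 : ℝ), (0 : ℝ × ℝ)) :=
      ((hUsm.fderiv_right (m := (⊤ : ℕ∞)) (by simp)).clm_apply contDiff_const).continuous
    have heq : (fun p : ℝ × (ℝ × ℝ) => F' p.1 p.2)
        = fun p : ℝ × (ℝ × ℝ) => lam p.2 ^ 2 *
          fderiv ℝ (fun q : ℝ × (ℝ × ℝ) => u q.1 q.2 2) p ((1 : ℝ), (0 : ℝ × ℝ)) := by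
      funext p
      rw [hF']
      simp only
      rw [hderiv_eq p.1 p.2]
    rw [heq]
    exact ((contDiff_lam.pow 2).continuous.comp continuous_snd).mul h1
  -- the bound
  set K : Set (ℝ × ℝ) := {y : ℝ × ℝ | y.1 ^ 2 + y.2 ^ 2 ≤ R ^ 2} with hK
  have hKco : IsCompact K := isCompact_disc hR.le
  have hKmeas : MeasurableSet K :=
    (isClosed_le (by fun_prop) continuous_const).measurableSet
  have hbox : IsCompact ((Set.Icc (t - 1) (t + 1)) ×ˢ K) := (isCompact_Icc).prod hKco
  obtain ⟨C, hC⟩ := hbox.exists_bound_of_continuousOn hGcont.continuousOn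
  set bound : ℝ × ℝ → ℝ := K.indicator (fun _ => C) with hbound
  have h_bound : ∀ᵐ x : ℝ × ℝ, ∀ s ∈ Metric.ball t 1, ‖F' s x‖ ≤ bound x := by
    filter_upwards [] with x
    intro s hs
    by_cases hx : x ∈ K
    · rw [hbound, Set.indicator_of_mem hx]
      have hsIcc : s ∈ Set.Icc (t - 1) (t + 1) := by
        rw [Metric.mem_ball, Real.dist_eq] at hs
        constructor <;> [linarith [abs_lt.mp hs |>.1, abs_lt.mp hs |>.2];
          linarith [abs_lt.mp hs |>.2]]
      exact hC (s, x) ⟨hsIcc, hx⟩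
    · rw [hbound, Set.indicator_of_notMem hx]
      have : R ^ 2 ≤ x.1 ^ 2 + x.2 ^ 2 := by
        simp only [hK, Set.mem_setOf_eq, not_le] at hx
        linarith
      rw [hF'0 s x this]
      simp
  have hbound_int : Integrable bound volume := by
    rw [hbound, integrable_indicator_iff hKmeas]
    apply (integrableOn_const_iff (C := C)).mpr
    right
    exact lt_of_le_of_lt (measure_mono (disc_subset_ball hR.le)) measure_closedBall_lt_top
  have hF_meas : ∀ᶠ s in nhds t, AEStronglyMeasurable (F s) volume := by
    filter_upwards [] with s
    exact (((contDiff_lam.pow 2).continuous).mul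
      ((contDiff_pi.mp (hvsm s) 2).continuous)).aestronglyMeasurable
  have hF_int : Integrable (F t) volume := by
    apply integrable_lam_sq.mono'
    · exact (((contDiff_lam.pow 2).continuous).mul
        ((contDiff_pi.mp (hvsm t) 2).continuous)).aestronglyMeasurable
    · filter_upwards [] with x
      rw [hF]
      simp only
      rw [Real.norm_eq_abs, abs_mul, abs_of_nonneg (show (0:ℝ) ≤ lam x ^ 2 by positivity)]
      have := sphere_comp_le (hsph t x) 2
      nlinarith [sq_nonneg (lam x), lam_pos x, this, abs_nonneg (u t x 2)]
  have hF'_meas : AEStronglyMeasurable (F' t) volume := by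
    have : Continuous (F' t) :=
      hGcont.comp (continuous_const.prodMk continuous_id)
    exact this.aestronglyMeasurable
  have h_diff : ∀ᵐ x : ℝ × ℝ, ∀ s ∈ Metric.ball t 1, HasDerivAt (fun r => F r x) (F' s x) s := by
    filter_upwards [] with x
    intro s _
    exact (hD s x).const_mul (lam x ^ 2)
  obtain ⟨hFint', hder⟩ := hasDerivAt_integral_of_dominated_loc_of_deriv_le (Metric.ball_mem_nhds t one_pos)
    hF_meas hF_int hF'_meas h_bound hbound_int h_diff
  -- Step C: identify the derivative integral
  set v : ℝ × ℝ → Fin 3 → ℝ := u t with hv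
  have hvsmt : ContDiff ℝ (⊤ : ℕ∞) v := hvsm t
  have hlocv : ∀ x : ℝ × ℝ, R ^ 2 ≤ x.1 ^ 2 + x.2 ^ 2 → v x = Phi x := hloc t
  have hid : ∀ x : ℝ × ℝ, F' t x = cross3 (v x) (lapP v x) 2
      + κ * (lam x ^ 2 * (dot3 (v x) (Phi x) * cross3 (v x) (Phi x) 2)) := by
    intro x
    have hdc : deriv (fun r => u r x 2) t = deriv (fun r => u r x) t 2 := by
      have hda : HasDerivAt (fun r => u r x) (deriv (fun r => u r x) t) t :=
        (((hslice x).differentiable (by simp)) t).hasDerivAt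
      have := HasFDerivAt.comp_hasDerivAt
        (l := ContinuousLinearMap.proj (R := ℝ) (φ := fun _ : Fin 3 => ℝ) 2) t
        (ContinuousLinearMap.hasFDerivAt _) hda
      have h2 : HasDerivAt (fun r : ℝ => u r x 2) (deriv (fun r => u r x) t 2) t := by
        simpa [Function.comp_def] using this
      exact h2.deriv
    have hlam2 : lam x ^ 2 ≠ 0 := pow_ne_zero 2 (ne_of_gt (lam_pos x))
    rw [hF']
    simp only
    rw [hdc, hLL t x]
    rw [cross3_apply2, cross3_apply2, cross3_apply2]
    simp only [Pi.add_apply, Pi.smul_apply, smul_eq_mul]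
    have h0 : lapP (u t) x = lapP v x := rfl
    rw [h0]
    have hlam : lam x ≠ 0 := ne_of_gt (lam_pos x)
    field_simp
    ring
  have hg2cont : Continuous (fun x : ℝ × ℝ =>
      κ * (lam x ^ 2 * (dot3 (v x) (Phi x) * cross3 (v x) (Phi x) 2))) := by
    have hvc : Continuous v := hvsmt.continuous
    have hPc : Continuous Phi := contDiff_Phi.continuous
    have hcomp : ∀ i : Fin 3, Continuous (fun x => v x i) := fun i =>
      (contDiff_pi.mp hvsmt i).continuous
    have hPcomp : ∀ i : Fin 3, Continuous (fun x => Phi x i) := fun i =>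
      (contDiff_pi.mp contDiff_Phi i).continuous
    apply continuous_const.mul
    apply ((contDiff_lam.pow 2).continuous).mul
    apply Continuous.mul
    · unfold dot3
      exact (((hcomp 0).mul (hPcomp 0)).add ((hcomp 1).mul (hPcomp 1))).add
        ((hcomp 2).mul (hPcomp 2))
    · simp only [cross3_apply2]
      exact ((hcomp 0).mul (hPcomp 1)).sub ((hcomp 1).mul (hPcomp 0))
  have hg2van : ∀ x : ℝ × ℝ, R ^ 2 ≤ x.1 ^ 2 + x.2 ^ 2 →
      κ * (lam x ^ 2 * (dot3 (v x) (Phi x) * cross3 (v x) (Phi x) 2)) = 0 := by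
    intro x hx
    rw [hlocv x hx, cross3_self]
    ring
  have hg2int : Integrable (fun x : ℝ × ℝ =>
      κ * (lam x ^ 2 * (dot3 (v x) (Phi x) * cross3 (v x) (Phi x) 2))) volume :=
    hg2cont.integrable_of_hasCompactSupport (hasCompactSupport_of_vanish hR.le hg2van)
  have hsplit : ∫ x : ℝ × ℝ, F' t x
      = κ * ∫ x : ℝ × ℝ, lam x ^ 2 * (dot3 (u t x) (Phi x) * cross3 (u t x) (Phi x) 2) := by
    rw [show (fun x : ℝ × ℝ => F' t x) = fun x => cross3 (v x) (lapP v x) 2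
        + κ * (lam x ^ 2 * (dot3 (v x) (Phi x) * cross3 (v x) (Phi x) 2)) from funext hid]
    rw [integral_add (integrable_cross_lap hvsmt hR hlocv) hg2int]
    rw [integral_cross_lap hvsmt hR hlocv]
    rw [integral_const_mul]
    simp [hv]
  rw [show (fun s => Sspin (u s) 2) = fun s => ∫ x : ℝ × ℝ, F s x from funext hS]
  rw [← hsplit]
  exact hder
end
end
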